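/- arXiv:1006.1339 — 11 statements merged into one kernel-verified Lean document; each statement's English description precedes it below -/
import Mathlib

section
/- Let n ≥ 3 and let V : ℤ → ℝ² be an origin-symmetric star-shaped 2n-gon in normalized form, with c_i = [V_{i−1}, V_{i+1}] and F_n = Σ_{i=1}^n c_i. Then F_n ≥ 2n·cos(π/n), with equality if and only if c_i = 2·cos(π/n) for all i (i.e. exactly for the SL(2,ℝ)-equivalence class of the affine-regular 2n-gon). -/
def areaForm (v w : ℝ × ℝ) : ℝ := v.1 * w.2 - v.2 * w.1

lemma areaForm_self (a : ℝ × ℝ) : areaForm a a = 0 := by unfold areaForm; ring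

lemma areaForm_comm (a b : ℝ × ℝ) : areaForm a b = - areaForm b a := by unfold areaForm; ring

lemma areaForm_neg_neg (a b : ℝ × ℝ) : areaForm (-a) (-b) = areaForm a b := by
  unfold areaForm; simp

lemma areaForm_neg_right (a b : ℝ × ℝ) : areaForm a (-b) = - areaForm a b := by
  unfold areaForm; simp; ring

lemma plucker (a b v w : ℝ × ℝ) :
    areaForm a b * areaForm w v + areaForm b v * areaForm w a + areaForm v a * areaForm w b = 0 := by
  unfold areaForm; ring

lemma cos_sum_zero (n : ℕ) (hn : 2 ≤ n) (φ : ℝ) :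
    ∑ j ∈ Finset.range n, Real.cos (φ + j * (2 * Real.pi / n)) = 0 := by
  have hnR : (n : ℝ) ≠ 0 := by positivity
  have hn0 : (n : ℂ) ≠ 0 := by exact_mod_cast hnR
  set z : ℂ := Complex.exp ((2 * Real.pi / n : ℝ) * Complex.I) with hz
  have hzn : z ^ n = 1 := by
    rw [hz, ← Complex.exp_nat_mul]
    have : (n : ℂ) * (((2 * Real.pi / n : ℝ) : ℂ) * Complex.I) = 2 * Real.pi * Complex.I := by
      push_cast
      field_simp
    rw [this, Complex.exp_two_pi_mul_I]
  have hz1 : z ≠ 1 := by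
    intro h
    rw [hz, Complex.exp_eq_one_iff] at h
    obtain ⟨k, hk⟩ := h
    have hpi : (Real.pi : ℂ) ≠ 0 := by exact_mod_cast Real.pi_ne_zero
    have hI : Complex.I ≠ 0 := Complex.I_ne_zero
    have hne : (2 * (Real.pi:ℂ) * Complex.I) ≠ 0 := by
      simp [Real.pi_ne_zero, Complex.I_ne_zero]
    have h1 : (1 : ℂ) = (k : ℂ) * n := by
      push_cast at hk
      field_simp at hk
      apply mul_right_cancel₀ hne
      rw [one_mul]
      linear_combination (2 * (Real.pi:ℂ) * Complex.I) * hk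
    have h2 : (1 : ℤ) = k * n := by exact_mod_cast h1
    rcases le_or_gt k 0 with h | h
    · nlinarith [(by exact_mod_cast hn : (2:ℤ) ≤ n)]
    · have : (n : ℤ) ≤ k * n := le_mul_of_one_le_left (by positivity) h
      have : (2:ℤ) ≤ n := by exact_mod_cast hn
      omega
  have hkey : ∀ j : ℕ, Real.cos (φ + j * (2 * Real.pi / n)) =
      (Complex.exp ((φ:ℂ) * Complex.I) * z ^ j).re := by
    intro j
    rw [hz, ← Complex.exp_nat_mul, ← Complex.exp_add]
    rw [← Complex.exp_ofReal_mul_I_re]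
    congr 2
    push_cast
    ring
  calc ∑ j ∈ Finset.range n, Real.cos (φ + j * (2 * Real.pi / n))
      = (∑ j ∈ Finset.range n, Complex.exp ((φ:ℂ) * Complex.I) * z ^ j).re := by
        rw [Complex.re_sum]; exact Finset.sum_congr rfl fun j _ => hkey j
    _ = 0 := by
        rw [← Finset.mul_sum, geom_sum_eq hz1, hzn]
        simp


lemma pshift_step (n : ℕ) (hn : 1 ≤ n) (f : ℤ → ℝ) (hf : ∀ i, f (i + n) = f i) (m : ℤ) :
    ∑ i ∈ Finset.range n, f (m + 1 + i) = ∑ i ∈ Finset.range n, f (m + i) := by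
  obtain ⟨nn, rfl⟩ : ∃ nn, n = nn + 1 := ⟨n - 1, by omega⟩
  rw [Finset.sum_range_succ, Finset.sum_range_succ']
  have h1 : m + 1 + (nn : ℤ) = m + (nn + 1 : ℕ) := by push_cast; ring
  have h2 : ∀ i : ℕ, m + 1 + (i : ℤ) = m + ((i + 1 : ℕ) : ℤ) := by intro i; push_cast; ring
  rw [h1]
  have h3 : f (m + ((nn + 1 : ℕ) : ℤ)) = f m := by
    have := hf m
    rw [← this]
  rw [h3]
  congr 1
  · exact Finset.sum_congr rfl fun i _ => by rw [h2 i]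
  · simp

lemma pshift (n : ℕ) (hn : 1 ≤ n) (f : ℤ → ℝ) (hf : ∀ i, f (i + n) = f i) (k : ℤ) :
    ∑ i ∈ Finset.range n, f (k + i) = ∑ i ∈ Finset.range n, f i := by
  induction k using Int.induction_on with
  | zero => simp
  | succ m ih => rw [show ((m:ℤ)+1) = (m:ℤ) + 1 from rfl] at *; rw [pshift_step n hn f hf m, ih]
  | pred m ih =>
      have := pshift_step n hn f hf (-(m:ℤ) - 1)
      rw [show -(m:ℤ) - 1 + 1 = -(m:ℤ) from by ring] at this
      show ∑ i ∈ Finset.range n, f (-(m:ℤ) - 1 + i) = ∑ i ∈ Finset.range n, f i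
      rw [← this]
      exact ih

lemma pext (n : ℕ) (f : ℤ → ℝ) (hf : ∀ i, f (i + n) = f i) (q i : ℤ) : f (i + q * n) = f i := by
  induction q using Int.induction_on with
  | zero => simp
  | succ m ih => rw [show i + ((m:ℤ)+1) * n = (i + m * n) + n from by ring, hf, ih]
  | pred m ih =>
      rw [show i + (-(m:ℤ)-1) * n = (i + (-(m:ℤ)) * n) - n from by ring]
      have h2 := hf ((i + (-(m:ℤ)) * n) - n)
      rw [show (i + (-(m:ℤ)) * n) - n + n = i + (-(m:ℤ)) * n from by ring] at h2
      rw [← h2, ih]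


noncomputable section
open Real

namespace SchD

def del (n : ℕ) : ℤ := ((n : ℤ) + 1) % 2

noncomputable def uu (n : ℕ) (j i : ℤ) : ℝ := Real.cos ((2 * (i + j) + del n) * (π / (2 * n)))

variable (n : ℕ) (hn : 3 ≤ n)
include hn

lemma uu_anti (j i : ℤ) : uu n j (i + n) = - uu n j i := by
  have hnR : (n : ℝ) ≠ 0 := by positivity
  unfold uu
  push_cast
  have : (2 * ((i:ℝ) + n + j) + del n) * (π / (2 * n)) = (2 * (i + j) + del n) * (π / (2 * n)) + π := by
    field_simp
    ring
  rw [this, Real.cos_add_pi]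

lemma uu_rec (j i : ℤ) :
    uu n j (i + 1) + uu n j (i - 1) = 2 * Real.cos (π / n) * uu n j i := by
  have hnR : (n : ℝ) ≠ 0 := by positivity
  unfold uu
  push_cast
  have h1 : (2 * ((i:ℝ) + 1 + j) + del n) * (π / (2 * n)) =
      (2 * (i + j) + del n) * (π / (2 * n)) + π / n := by
    field_simp; ring
  have h2 : (2 * ((i:ℝ) - 1 + j) + del n) * (π / (2 * n)) =
      (2 * (i + j) + del n) * (π / (2 * n)) - π / n := by
    field_simp; ring
  rw [h1, h2, Real.cos_add, Real.cos_sub]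
  ring

lemma uu_ne (j i : ℤ) : uu n j i ≠ 0 := by
  have hnR : (n : ℝ) ≠ 0 := by positivity
  have hπ : (π : ℝ) ≠ 0 := Real.pi_ne_zero
  unfold uu
  intro h
  rw [Real.cos_eq_zero_iff] at h
  obtain ⟨k, hk⟩ := h
  have h0 : (((2 * (i + j) + del n : ℤ) : ℝ) - ((2 * k + 1) * n)) * (2 * π) = 0 := by
    push_cast at hk ⊢
    field_simp at hk
    linear_combination (2 * π) * hk
  rcases mul_eq_zero.mp h0 with h1 | h1
  · have hR : ((2 * (i + j) + del n : ℤ) : ℝ) = (((2 * k + 1) * n : ℤ) : ℝ) := by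
      push_cast
      push_cast at h1
      linarith
    have hZ : 2 * (i + j) + del n = (2 * k + 1) * (n : ℤ) := by exact_mod_cast hR
    rcases Nat.even_or_odd n with he | ho
    · obtain ⟨t, ht⟩ := he
      have hd : del n = 1 := by unfold del; omega
      have hnt : (n : ℤ) = 2 * t := by omega
      rw [hd, hnt, show (2 * k + 1) * (2 * (t:ℤ)) = 2 * ((2 * k + 1) * t) from by ring] at hZ
      omega
    · obtain ⟨t, ht⟩ := ho
      have hd : del n = 0 := by unfold del; omega
      have hnt : (n : ℤ) = 2 * t + 1 := by omega
      rw [hd, hnt, show (2 * k + 1) * (2 * (t:ℤ) + 1) = 2 * (2 * k * t + k + t) + 1 from by ring] at hZ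
      omega
  · nlinarith [Real.pi_pos]



lemma uu_sq_sum (i : ℤ) : ∑ j ∈ Finset.range n, (uu n (j:ℤ) i)^2 = n / 2 := by
  have hnR : (n:ℝ) ≠ 0 := by positivity
  have key : ∀ j : ℕ, (uu n (j:ℤ) i)^2 =
      1/2 + 1/2 * Real.cos (((2*(i:ℝ)+del n) * (π/n)) + j * (2*π/n)) := by
    intro j
    unfold uu
    have harg : 2 * ((2 * ((i:ℝ) + (j:ℤ)) + del n) * (π/(2*n))) =
        ((2*(i:ℝ)+del n) * (π/n)) + j * (2*π/n) := by
      push_cast; field_simp; ring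
    rw [Real.cos_sq, harg]
    ring
  rw [Finset.sum_congr rfl fun j _ => key j, Finset.sum_add_distrib, ← Finset.mul_sum,
    cos_sum_zero n (by omega) _]
  simp
  ring

lemma uu_prod_sum (i : ℤ) :
    ∑ j ∈ Finset.range n, uu n (j:ℤ) i * uu n (j:ℤ) (i+1) = n / 2 * Real.cos (π/n) := by
  have hnR : (n:ℝ) ≠ 0 := by positivity
  have key : ∀ j : ℕ, uu n (j:ℤ) i * uu n (j:ℤ) (i+1) =
      1/2 * Real.cos (π/n) +
      1/2 * Real.cos (((2*(i:ℝ)+1+del n) * (π/n)) + j * (2*π/n)) := by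
    intro j
    unfold uu
    have hcc : ∀ A B : ℝ, Real.cos A * Real.cos B = (Real.cos (A+B) + Real.cos (A-B))/2 := by
      intro A B; rw [Real.cos_add, Real.cos_sub]; ring
    rw [hcc]
    have h1 : (2 * ((i:ℝ) + (j:ℤ)) + del n) * (π/(2*n)) + (2 * (((i+1:ℤ):ℝ) + (j:ℤ)) + del n) * (π/(2*n)) =
        ((2*(i:ℝ)+1+del n) * (π/n)) + j * (2*π/n) := by
      push_cast; field_simp; ring
    have h2 : (2 * ((i:ℝ) + (j:ℤ)) + del n) * (π/(2*n)) - (2 * (((i+1:ℤ):ℝ) + (j:ℤ)) + del n) * (π/(2*n)) =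
        -(π/n) := by
      push_cast; field_simp; ring
    rw [h1, h2, Real.cos_neg]
    ring
  rw [Finset.sum_congr rfl fun j _ => key j, Finset.sum_add_distrib]
  have hz := cos_sum_zero n (by omega) ((2*(i:ℝ)+1+del n) * (π/n))
  have h2 : ∑ j ∈ Finset.range n,
      (1/2 * Real.cos (((2*(i:ℝ)+1+del n) * (π/n)) + j * (2*π/n))) = 0 := by
    rw [← Finset.mul_sum, hz]; ring
  rw [h2]
  simp [Finset.sum_const, Finset.card_range]
  ring

end SchD


lemma small_param (A B ε : ℝ) (hε : 0 < ε) (h : ∀ t : ℝ, |t| < ε → 0 ≤ t*B + t^2*A) :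
    B = 0 := by
  by_contra hB
  have hB' : 0 < |B| := abs_pos.mpr hB
  set t₀ := min (ε/2) (|B|/(2*(|A|+1))) with ht₀def
  have hApos : (0:ℝ) < 2*(|A|+1) := by positivity
  have ht0 : 0 < t₀ := lt_min (by linarith) (by positivity)
  have ht1 : t₀ ≤ ε/2 := min_le_left _ _
  have ht2 : t₀ ≤ |B|/(2*(|A|+1)) := min_le_right _ _
  have ht2' : t₀*(2*(|A|+1)) ≤ |B| := (le_div_iff₀ hApos).mp ht2
  have e2 : t₀^2*(2*(|A|+1)) ≤ t₀*|B| := by nlinarith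
  have e1 : t₀^2*A ≤ t₀^2*|A| := mul_le_mul_of_nonneg_left (le_abs_self A) (sq_nonneg t₀)
  rcases lt_or_gt_of_ne hB with hBneg | hBpos
  · have hkey := h t₀ (by rw [abs_of_pos ht0]; linarith)
    have hBeq : B = -|B| := by rw [abs_of_neg hBneg]; ring
    nlinarith
  · have hkey := h (-t₀) (by rw [abs_neg, abs_of_pos ht0]; linarith)
    have hBeq : B = |B| := by rw [abs_of_pos hBpos]
    nlinarith

lemma sign_change (n : ℕ) (hn : 3 ≤ n) (u : ℤ → ℝ) (hu : ∀ i : ℤ, u (i+n) = -u i)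
    (hnz : ∀ i : ℤ, u i ≠ 0) :
    ∃ k : ℤ, (0 < u k ∧ 0 < u (k+n-1)) ∨ (u k < 0 ∧ u (k+n-1) < 0) := by
  by_contra hcon
  push_neg at hcon
  have hcons : ∀ k : ℤ, 0 < u k * u (k+1) := by
    intro k
    have h := hcon (k+1)
    have e : u (k+1+(n:ℤ)-1) = - u k := by
      rw [show k+1+(n:ℤ)-1 = k+(n:ℤ) from by ring, hu k]
    rw [e] at h
    rcases (hnz k).lt_or_gt with h2 | h2 <;> rcases (hnz (k+1)).lt_or_gt with h1 | h1
    · exact mul_pos_of_neg_of_neg h2 h1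
    · exfalso; exact absurd (h.1 h1) (by simp; linarith)
    · exfalso; exact absurd (h.2 h1) (by simp; linarith)
    · exact mul_pos h2 h1
  have chain : ∀ m : ℕ, 0 < u 0 * u m := by
    intro m
    induction m with
    | zero => exact mul_self_pos.mpr (hnz 0)
    | succ s ih =>
        have h1 := hcons (s:ℤ)
        have hb : 0 < u (s:ℤ) * u (s:ℤ) := mul_self_pos.mpr (hnz _)
        have : ((s+1:ℕ):ℤ) = (s:ℤ)+1 := by push_cast; ring
        rw [this]
        nlinarith
  have hfin := chain n
  have : u ((n:ℕ):ℤ) = - u 0 := by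
    have := hu 0
    rwa [zero_add] at this
  rw [this] at hfin
  nlinarith [mul_self_pos.mpr (hnz 0)]







lemma Vneg_shift (n : ℕ) (V : ℤ → ℝ × ℝ) (hsym : ∀ i : ℤ, V (i + n) = -V i) (i : ℤ) :
    V (i - n) = - V i := by
  have h := hsym (i - n)
  rw [show i-(n:ℤ)+n = i from by ring] at h
  rw [h, neg_neg]

lemma area_shift (n : ℕ) (V : ℤ → ℝ × ℝ) (hsym : ∀ i : ℤ, V (i + n) = -V i) (q i j : ℤ) :
    areaForm (V (i + q*n)) (V (j + q*n)) = areaForm (V i) (V j) := by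
  induction q using Int.induction_on with
  | zero => simp
  | succ m ih =>
      rw [show i+((m:ℤ)+1)*n = (i+m*n)+n from by ring, show j+((m:ℤ)+1)*n = (j+m*n)+n from by ring,
        hsym, hsym, areaForm_neg_neg]
      exact ih
  | pred m ih =>
      rw [show i+(-(m:ℤ)-1)*n = (i+(-(m:ℤ))*n)-n from by ring,
        show j+(-(m:ℤ)-1)*n = (j+(-(m:ℤ))*n)-n from by ring,
        Vneg_shift n V hsym, Vneg_shift n V hsym, areaForm_neg_neg]
      exact ih

lemma star_ext (n : ℕ) (hn : 3 ≤ n) (V : ℤ → ℝ × ℝ)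
    (hsym : ∀ i : ℤ, V (i + n) = -V i)
    (hstar : ∀ i j : ℤ, 0 ≤ i → i < j → j ≤ (n : ℤ) - 1 → 0 < areaForm (V i) (V j)) :
    ∀ i j : ℤ, i < j → j < i + n → 0 < areaForm (V i) (V j) := by
  intro i j hij hji
  have hn3 : (3:ℤ) ≤ (n:ℤ) := by exact_mod_cast hn
  have hr0 : 0 ≤ i % (n:ℤ) := Int.emod_nonneg i (by omega)
  have hr1 : i % (n:ℤ) < n := Int.emod_lt_of_pos i (by omega)
  have h1 := area_shift n V hsym (i/(n:ℤ)) (i % (n:ℤ)) (i % (n:ℤ) + (j-i))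
  rw [show i % (n:ℤ) + (i/(n:ℤ))*(n:ℤ) = i from by linear_combination Int.emod_add_mul_ediv i (n:ℤ),
      show i % (n:ℤ) + (j-i) + (i/(n:ℤ))*(n:ℤ) = j from by linear_combination Int.emod_add_mul_ediv i (n:ℤ)] at h1
  rw [h1]
  set r := i % (n:ℤ)
  set d := j - i with hd
  rcases lt_or_ge (r+d) (n:ℤ) with h | h
  · exact hstar r (r+d) hr0 (by omega) (by omega)
  · have h2 : V (r+d) = - V (r+d-n) := by
      have h3 := hsym (r+d-n)
      rw [show r+d-(n:ℤ)+n = r+d from by ring] at h3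
      exact h3
    have h5 : areaForm (V r) (V (r+d)) = - areaForm (V r) (V (r+d-n)) := by
      rw [h2, areaForm_neg_right]
    have h6 : areaForm (V r) (V (r+d-n)) = - areaForm (V (r+d-n)) (V r) := areaForm_comm _ _
    have h4 := hstar (r+d-n) r (by omega) (by omega) (by omega)
    linarith








lemma window_lemma (n : ℕ) (hn : 3 ≤ n) (V : ℤ → ℝ × ℝ) (c u : ℤ → ℝ)
    (hrecP : ∀ (p : ℝ × ℝ) (i : ℤ),
      areaForm p (V (i+1)) + areaForm p (V (i-1)) = c i * areaForm p (V i))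
    (hstar' : ∀ i j : ℤ, i < j → j < i + n → 0 < areaForm (V i) (V j))
    (hVanti : ∀ i : ℤ, V (i + n) = - V i)
    (hu : ∀ i : ℤ, u (i + n) = - u i)
    (k : ℤ) (hk0 : 0 < u k) (hk1 : 0 < u (k + n - 1)) :
    0 ≤ ∑ i ∈ Finset.range n, (c (k+i) * u (k+i)^2 - 2 * u (k+i) * u (k+i+1)) ∧
    (∑ i ∈ Finset.range n, (c (k+i) * u (k+i)^2 - 2 * u (k+i) * u (k+i+1)) = 0 →
      ∀ i : ℤ, k+1 ≤ i → i ≤ k + (n:ℤ) - 2 → u (i+1) + u (i-1) = c i * u i) := by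
  have hn3 : (3:ℤ) ≤ (n:ℤ) := by exact_mod_cast hn
  set w := areaForm (V k) (V (k + n - 1)) with hw_def
  have hw : 0 < w := hstar' k (k+n-1) (by omega) (by omega)
  set x : ℤ → ℝ := fun i => u (k+n-1) * areaForm (V k) (V i)
      - u k * areaForm (V (k+n-1)) (V i) with hx_def
  have hxrec : ∀ i : ℤ, x (i+1) + x (i-1) = c i * x i := by
    intro i
    have h1 := hrecP (V k) i
    have h2 := hrecP (V (k+n-1)) i
    simp only [hx_def]
    linear_combination u (k+n-1) * h1 - u k * h2
  have hxk : x k = u k * w := by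
    simp only [hx_def, hw_def, areaForm_self]
    rw [areaForm_comm (V (k+n-1)) (V k)]
    ring
  have hxk1 : x (k+n-1) = u (k+n-1) * w := by
    simp only [hx_def, hw_def, areaForm_self]
    ring
  have hxanti : ∀ i : ℤ, x (i+n) = - x i := by
    intro i
    simp only [hx_def]
    rw [hVanti i, areaForm_neg_right, areaForm_neg_right]
    ring
  have hxpos : ∀ i : ℤ, k ≤ i → i ≤ k+n-1 → 0 < x i := by
    intro i h1 h2
    rcases eq_or_lt_of_le h1 with rfl | h1'
    · rw [hxk]; exact mul_pos hk0 hw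
    · rcases eq_or_lt_of_le h2 with h2e | h2'
      · rw [h2e, hxk1]; exact mul_pos hk1 hw
      · have hA := hstar' k i h1' (by omega)
        have hB := hstar' i (k+n-1) h2' (by omega)
        have hBc := areaForm_comm (V (k+n-1)) (V i)
        simp only [hx_def]
        rw [hBc]
        nlinarith [mul_pos hk1 hA, mul_pos hk0 hB]
  have hxkpos : 0 < x k := hxpos k le_rfl (by omega)
  have hxkn : x (k+(n:ℤ)) = - x k := hxanti k
  -- key termwise identity
  have hkey : ∀ i : ℤ, x i ≠ 0 → x (i+1) ≠ 0 →
      c i * u i^2 - 2 * u i * u (i+1) =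
        (x (i+1) * u i - x i * u (i+1))^2 / (x i * x (i+1)) +
        (x (i-1) / x i * u i^2 - x i / x (i+1) * u (i+1)^2) := by
    intro i h1 h2
    have hr := hxrec i
    have hcc : c i = (x (i+1) + x (i-1)) / x i := by
      field_simp
      linarith
    rw [hcc]
    field_simp
    ring
  -- nonvanishing on the window
  have hxne : ∀ i : ℕ, i < n → x (k+(i:ℤ)) ≠ 0 := by
    intro i hi
    exact ne_of_gt (hxpos _ (by omega) (by omega))
  have hxne1 : ∀ i : ℕ, i < n → x (k+(i:ℤ)+1) ≠ 0 := by
    intro i hi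
    rcases lt_or_eq_of_le (Nat.succ_le_of_lt hi) with h | h
    · exact ne_of_gt (hxpos _ (by omega) (by omega))
    · have hcast : k+(i:ℤ)+1 = k+(n:ℤ) := by omega
      rw [hcast, hxkn]
      exact neg_ne_zero.mpr (ne_of_gt hxkpos)
  -- rewrite the sum termwise
  have hcongr : ∑ i ∈ Finset.range n, (c (k+i) * u (k+i)^2 - 2 * u (k+i) * u (k+i+1)) =
      ∑ i ∈ Finset.range n,
        ((x (k+(i:ℤ)+1) * u (k+(i:ℤ)) - x (k+(i:ℤ)) * u (k+(i:ℤ)+1))^2 / (x (k+(i:ℤ)) * x (k+(i:ℤ)+1)) +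
         (x (k+(i:ℤ)-1) / x (k+(i:ℤ)) * u (k+(i:ℤ))^2 - x (k+(i:ℤ)) / x (k+(i:ℤ)+1) * u (k+(i:ℤ)+1)^2)) := by
    refine Finset.sum_congr rfl fun i hi => ?_
    have := hkey (k+(i:ℤ)) (hxne i (Finset.mem_range.mp hi)) (hxne1 i (Finset.mem_range.mp hi))
    convert this using 3 <;> ring_nf
  rw [hcongr, Finset.sum_add_distrib]
  -- telescoping part is zero
  have htel : ∑ i ∈ Finset.range n,
      (x (k+(i:ℤ)-1) / x (k+(i:ℤ)) * u (k+(i:ℤ))^2 - x (k+(i:ℤ)) / x (k+(i:ℤ)+1) * u (k+(i:ℤ)+1)^2) = 0 := by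
    have hterm : ∀ i : ℕ,
        x (k+(i:ℤ)-1) / x (k+(i:ℤ)) * u (k+(i:ℤ))^2 - x (k+(i:ℤ)) / x (k+(i:ℤ)+1) * u (k+(i:ℤ)+1)^2 =
        (fun m : ℕ => x (k+(m:ℤ)-1) / x (k+(m:ℤ)) * u (k+(m:ℤ))^2) i -
        (fun m : ℕ => x (k+(m:ℤ)-1) / x (k+(m:ℤ)) * u (k+(m:ℤ))^2) (i+1) := by
      intro i
      beta_reduce
      have e1 : k+((i+1:ℕ):ℤ)-1 = k+(i:ℤ) := by push_cast; ring
      have e2 : k+((i+1:ℕ):ℤ) = k+(i:ℤ)+1 := by push_cast; ring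
      rw [e1, e2]
    rw [Finset.sum_congr rfl fun i _ => hterm i, Finset.sum_range_sub']
    beta_reduce
    have e1 : k+((0:ℕ):ℤ)-1 = k-1 := by push_cast; ring
    have e2 : k+((0:ℕ):ℤ) = k := by push_cast; ring
    have e3 : k+((n:ℕ):ℤ)-1 = (k-1)+(n:ℤ) := by push_cast; ring
    rw [e1, e2, e3, hxanti (k-1), hxkn, hu k]
    rw [neg_div_neg_eq, neg_sq]
    ring
  rw [htel, add_zero]
  -- split off the last term of the square part
  obtain ⟨m, hm⟩ : ∃ m, n = m + 1 := ⟨n - 1, by omega⟩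
  have hlast : (x (k+(m:ℤ)+1) * u (k+(m:ℤ)) - x (k+(m:ℤ)) * u (k+(m:ℤ)+1))^2 / (x (k+(m:ℤ)) * x (k+(m:ℤ)+1)) = 0 := by
    have e1 : k+(m:ℤ)+1 = k+(n:ℤ) := by omega
    have e2 : k+(m:ℤ) = k+(n:ℤ)-1 := by omega
    have e3 : u (k+(n:ℤ)) = - u k := hu k
    rw [e1, e2, hxkn, hxk, hxk1, e3]
    have : -(u k * w) * u (k + (n:ℤ) - 1) - u (k + (n:ℤ) - 1) * w * -u k = 0 := by ring
    rw [this]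
    simp
  have hsq : ∀ i ∈ Finset.range m,
      0 ≤ (x (k+(i:ℤ)+1) * u (k+(i:ℤ)) - x (k+(i:ℤ)) * u (k+(i:ℤ)+1))^2 / (x (k+(i:ℤ)) * x (k+(i:ℤ)+1)) := by
    intro i hi
    have him := Finset.mem_range.mp hi
    have hp1 : 0 < x (k+(i:ℤ)) := hxpos _ (by omega) (by omega)
    have hp2 : 0 < x (k+(i:ℤ)+1) := hxpos _ (by omega) (by omega)
    positivity
  rw [hm, Finset.sum_range_succ, hlast, add_zero]
  constructor
  · exact Finset.sum_nonneg hsq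
  · intro hS0 i hi1 hi2
    have hDzero : ∀ i ∈ Finset.range m,
        x (k+(i:ℤ)+1) * u (k+(i:ℤ)) - x (k+(i:ℤ)) * u (k+(i:ℤ)+1) = 0 := by
      intro j hj
      have hjm := Finset.mem_range.mp hj
      have hz := (Finset.sum_eq_zero_iff_of_nonneg hsq).mp hS0 j hj
      have hp1 : 0 < x (k+(j:ℤ)) := hxpos _ (by omega) (by omega)
      have hp2 : 0 < x (k+(j:ℤ)+1) := hxpos _ (by omega) (by omega)
      have hden : x (k+(j:ℤ)) * x (k+(j:ℤ)+1) ≠ 0 := ne_of_gt (mul_pos hp1 hp2)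
      rcases div_eq_zero_iff.mp hz with h | h
      · exact pow_eq_zero_iff (by norm_num) |>.mp h
      · exact absurd h hden
    -- chain: proportionality on the window
    have chain : ∀ t : ℕ, (t:ℤ) ≤ (n:ℤ) - 1 → u (k+(t:ℤ)) * x k = u k * x (k+(t:ℤ)) := by
      intro t
      induction t with
      | zero => intro _; norm_num
      | succ s ih =>
          intro hs
          have hs' : (s:ℤ) ≤ (n:ℤ) - 1 := by push_cast at hs ⊢; omega
          have hsm : s ∈ Finset.range m := Finset.mem_range.mpr (by omega)
          have hD := hDzero s hsm
          have hxs : x (k+(s:ℤ)) ≠ 0 := hxne s (by omega)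
          have e2 : k+((s+1:ℕ):ℤ) = k+(s:ℤ)+1 := by push_cast; ring
          rw [e2]
          have ihh := ih hs'
          apply mul_left_cancel₀ hxs
          linear_combination (-(x k)) * hD + x (k+(s:ℤ)+1) * ihh
    have czn : ∀ t : ℤ, 0 ≤ t → t ≤ (n:ℤ) - 1 → u (k+t) * x k = u k * x (k+t) := by
      intro t ht0 ht1
      have := chain t.toNat (by omega)
      rwa [show ((t.toNat : ℤ)) = t from by omega] at this
    have hxko : x k ≠ 0 := ne_of_gt hxkpos
    have a1 := czn (i-k-1) (by omega) (by omega)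
    have a2 := czn (i-k) (by omega) (by omega)
    have a3 := czn (i-k+1) (by omega) (by omega)
    rw [show k+(i-k-1) = i-1 from by ring] at a1
    rw [show k+(i-k) = i from by ring] at a2
    rw [show k+(i-k+1) = i+1 from by ring] at a3
    apply mul_right_cancel₀ hxko
    linear_combination a3 + a1 + u k * (hxrec i) - c i * a2




lemma emod_shift (n : ℕ) (hn : 1 ≤ n) (a : ℤ) :
    (a + (n:ℤ)) % (2*(n:ℤ)) =
      if a % (2*(n:ℤ)) < (n:ℤ) then a % (2*(n:ℤ)) + n else a % (2*(n:ℤ)) - n := by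
  have h2n : (0:ℤ) < 2*(n:ℤ) := by omega
  have hd := Int.mul_ediv_add_emod a (2*(n:ℤ))
  have hr0 : 0 ≤ a % (2*(n:ℤ)) := Int.emod_nonneg a (by omega)
  have hr1 : a % (2*(n:ℤ)) < 2*(n:ℤ) := Int.emod_lt_of_pos a h2n
  have e1 : a + (n:ℤ) = (a % (2*(n:ℤ)) + n) + (2*(n:ℤ)) * (a / (2*(n:ℤ))) := by
    linear_combination -hd
  rw [e1, Int.add_mul_emod_self_left]
  split_ifs with hcond
  · exact Int.emod_eq_of_lt (by omega) (by omega)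
  · have e2 : a % (2*(n:ℤ)) + (n:ℤ) = (a % (2*(n:ℤ)) - n) + (2*(n:ℤ))*1 := by ring
    rw [e2, Int.add_mul_emod_self_left]
    exact Int.emod_eq_of_lt (by omega) (by omega)

/-- **Theorem (discrete Schwartz inequality).** For an origin-symmetric star-shaped
`2n`-gon in normalized form (`V (i+n) = −V i`, `[V i, V (i+1)] = 1`, vertices in cyclic
order around the origin), the quantity `F_n = ∑_{i=1}^n c_i`, where
`c_i = [V (i−1), V (i+1)]`, satisfies `F_n ≥ 2n cos (π/n)`, with equality iff all
`c_i = 2 cos (π/n)`. -/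
theorem schwartz_discrete (n : ℕ) (hn : 3 ≤ n) (V : ℤ → ℝ × ℝ)
    (hsym : ∀ i : ℤ, V (i + n) = -V i)
    (hunit : ∀ i : ℤ, areaForm (V i) (V (i + 1)) = 1)
    (hstar : ∀ i j : ℤ, 0 ≤ i → i < j → j ≤ (n : ℤ) - 1 → 0 < areaForm (V i) (V j))
    (c : ℤ → ℝ) (hc : ∀ i : ℤ, c i = areaForm (V (i - 1)) (V (i + 1)))
    (F : ℝ) (hF : F = ∑ i ∈ Finset.range n, c (i + 1)) :
    2 * n * Real.cos (Real.pi / n) ≤ F ∧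
      (F = 2 * n * Real.cos (Real.pi / n) ↔ ∀ i : ℤ, c i = 2 * Real.cos (Real.pi / n)) := by
  have hn1 : 1 ≤ n := by omega
  have hn3 : (3:ℤ) ≤ (n:ℤ) := by exact_mod_cast hn
  have hnR : (0:ℝ) < n := by positivity
  have hstar' := star_ext n hn V hsym hstar
  have hrecP : ∀ (p : ℝ × ℝ) (i : ℤ),
      areaForm p (V (i+1)) + areaForm p (V (i-1)) = c i * areaForm p (V i) := by
    intro p i
    have hp := plucker (V (i-1)) (V i) (V (i+1)) p
    have h1 : areaForm (V (i-1)) (V i) = 1 := by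
      have := hunit (i-1); rwa [show i-1+1 = i from by ring] at this
    have h2 : areaForm (V i) (V (i+1)) = 1 := hunit i
    have h3 : areaForm (V (i+1)) (V (i-1)) = - c i := by
      rw [hc i]; exact areaForm_comm _ _
    rw [h1, h2, h3] at hp
    linarith
  have hcper : ∀ i : ℤ, c (i + (n:ℤ)) = c i := by
    intro i
    rw [hc, hc, show i+(n:ℤ)-1 = (i-1)+(n:ℤ) from by ring,
      show i+(n:ℤ)+1 = (i+1)+(n:ℤ) from by ring, hsym, hsym, areaForm_neg_neg]
  have hUanti := SchD.uu_anti n hn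
  have hUne := SchD.uu_ne n hn
  have hper : ∀ (w : ℤ → ℝ), (∀ i : ℤ, w (i+(n:ℤ)) = -w i) → ∀ i : ℤ,
      c (i+(n:ℤ)) * w (i+(n:ℤ))^2 - 2*w (i+(n:ℤ))*w ((i+(n:ℤ))+1) = c i * w i^2 - 2*w i*w (i+1) := by
    intro w hw i
    rw [hcper i, hw i, show i+(n:ℤ)+1 = (i+1)+(n:ℤ) from by ring, hw (i+1)]
    ring
  have hTnonneg : ∀ (u : ℤ → ℝ), (∀ i : ℤ, u (i+(n:ℤ)) = -u i) → (∀ i : ℤ, u i ≠ 0) →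
      0 ≤ ∑ i ∈ Finset.range n, (c (i:ℤ) * u (i:ℤ)^2 - 2*u (i:ℤ)*u ((i:ℤ)+1)) := by
    intro u hu hnz
    obtain ⟨k, hcase⟩ := sign_change n hn u hu hnz
    have hps := pshift n hn1 (fun i => c i * u i^2 - 2*u i*u (i+1)) (hper u hu) k
    rcases hcase with ⟨h0, h1⟩ | ⟨h0, h1⟩
    · have hwin := (window_lemma n hn V c u hrecP hstar' hsym hu k h0 h1).1
      calc (0:ℝ) ≤ ∑ i ∈ Finset.range n, (c (k+(i:ℤ)) * u (k+(i:ℤ))^2 - 2*u (k+(i:ℤ))*u (k+(i:ℤ)+1)) := hwin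
        _ = _ := hps
    · have hu' : ∀ i : ℤ, (fun i => -u i) (i+(n:ℤ)) = -(fun i => -u i) i := by
        intro i; simp [hu i]
      have hwin := (window_lemma n hn V c (fun i => -u i) hrecP hstar' hsym hu' k
        (by simpa using neg_pos.mpr h0) (by simpa using neg_pos.mpr h1)).1
      have hsame : ∑ i ∈ Finset.range n,
          (c (k+(i:ℤ)) * (fun i => -u i) (k+(i:ℤ))^2 - 2*(fun i => -u i) (k+(i:ℤ))*(fun i => -u i) (k+(i:ℤ)+1))
          = ∑ i ∈ Finset.range n, (c (k+(i:ℤ)) * u (k+(i:ℤ))^2 - 2*u (k+(i:ℤ))*u (k+(i:ℤ)+1)) := by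
        exact Finset.sum_congr rfl fun i _ => by beta_reduce; ring
      rw [hsame] at hwin
      calc (0:ℝ) ≤ ∑ i ∈ Finset.range n, (c (k+(i:ℤ)) * u (k+(i:ℤ))^2 - 2*u (k+(i:ℤ))*u (k+(i:ℤ)+1)) := hwin
        _ = _ := hps
  have hTsum : ∑ j ∈ Finset.range n, (∑ i ∈ Finset.range n,
      (c (i:ℤ) * SchD.uu n (j:ℤ) (i:ℤ)^2 - 2*SchD.uu n (j:ℤ) (i:ℤ)*SchD.uu n (j:ℤ) ((i:ℤ)+1)))
      = (n:ℝ)/2 * (∑ i ∈ Finset.range n, c (i:ℤ)) - (n:ℝ)^2*Real.cos (Real.pi/n) := by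
    rw [Finset.sum_comm]
    have hinner : ∀ i : ℕ, ∑ j ∈ Finset.range n,
        (c (i:ℤ) * SchD.uu n (j:ℤ) (i:ℤ)^2 - 2*SchD.uu n (j:ℤ) (i:ℤ)*SchD.uu n (j:ℤ) ((i:ℤ)+1))
        = c (i:ℤ) * ((n:ℝ)/2) - (n:ℝ)*Real.cos (Real.pi/n) := by
      intro i
      rw [Finset.sum_sub_distrib, ← Finset.mul_sum, SchD.uu_sq_sum n hn (i:ℤ)]
      have h2 : ∑ j ∈ Finset.range n, 2*SchD.uu n (j:ℤ) (i:ℤ)*SchD.uu n (j:ℤ) ((i:ℤ)+1)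
          = 2 * ∑ j ∈ Finset.range n, SchD.uu n (j:ℤ) (i:ℤ)*SchD.uu n (j:ℤ) ((i:ℤ)+1) := by
        rw [Finset.mul_sum]; exact Finset.sum_congr rfl fun j _ => by ring
      rw [h2, SchD.uu_prod_sum n hn (i:ℤ)]
      ring
    rw [Finset.sum_congr rfl fun i _ => hinner i, Finset.sum_sub_distrib, ← Finset.sum_mul,
      Finset.sum_const, Finset.card_range, nsmul_eq_mul]
    ring
  have hFc : ∑ i ∈ Finset.range n, c (i:ℤ) = F := by
    rw [hF]
    have hs := pshift n hn1 c hcper 1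
    rw [← hs]
    exact Finset.sum_congr rfl fun i _ => by rw [add_comm]
  have hTj : ∀ j : ℕ, 0 ≤ ∑ i ∈ Finset.range n,
      (c (i:ℤ) * SchD.uu n (j:ℤ) (i:ℤ)^2 - 2*SchD.uu n (j:ℤ) (i:ℤ)*SchD.uu n (j:ℤ) ((i:ℤ)+1)) :=
    fun j => hTnonneg (SchD.uu n (j:ℤ)) (hUanti (j:ℤ)) (hUne (j:ℤ))
  have hmain : 0 ≤ (n:ℝ)/2 * F - (n:ℝ)^2*Real.cos (Real.pi/n) := by
    rw [← hFc, ← hTsum]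
    exact Finset.sum_nonneg fun j _ => hTj j
  have hineq : 2*(n:ℝ)*Real.cos (Real.pi/n) ≤ F := by
    by_contra hlt
    push_neg at hlt
    nlinarith
  refine ⟨hineq, ?_, ?_⟩
  · intro hFeq
    have hT0 : ∑ j ∈ Finset.range n, (∑ i ∈ Finset.range n,
        (c (i:ℤ) * SchD.uu n (j:ℤ) (i:ℤ)^2 - 2*SchD.uu n (j:ℤ) (i:ℤ)*SchD.uu n (j:ℤ) ((i:ℤ)+1))) = 0 := by
      rw [hTsum, hFc, hFeq]; ring
    have hTz := (Finset.sum_eq_zero_iff_of_nonneg (fun j _ => hTj j)).mp hT0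
    have hT00 : ∑ i ∈ Finset.range n,
        (c (i:ℤ) * SchD.uu n ((0:ℕ):ℤ) (i:ℤ)^2
          - 2*SchD.uu n ((0:ℕ):ℤ) (i:ℤ)*SchD.uu n ((0:ℕ):ℤ) ((i:ℤ)+1)) = 0 :=
      hTz 0 (Finset.mem_range.mpr (by omega))
    -- generalized equality extraction
    have hgen : ∀ (U : ℤ → ℝ), (∀ i : ℤ, U (i+(n:ℤ)) = -U i) → (∀ i : ℤ, U i ≠ 0) →
        (∀ i : ℤ, U (i+1) + U (i-1) = 2*Real.cos (Real.pi/n) * U i) →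
        ∀ k : ℤ, 0 < U k → 0 < U (k+(n:ℤ)-1) →
        (∑ i ∈ Finset.range n, (c (i:ℤ) * U (i:ℤ)^2 - 2*U (i:ℤ)*U ((i:ℤ)+1))) = 0 →
        ∀ i₀ : ℕ, i₀ < n → c (i₀:ℤ) = 2*Real.cos (Real.pi/n) := by
      intro U hUa hUn hUr k hU0 hU1 hUT i₀ hi₀
      set v : ℤ → ℝ := fun i => if (i - (i₀:ℤ)) % (2*(n:ℤ)) = 0 then 1
        else if (i - (i₀:ℤ)) % (2*(n:ℤ)) = (n:ℤ) then -1 else 0 with hv_def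
      have hvanti : ∀ i : ℤ, v (i+(n:ℤ)) = - v i := by
        intro i
        have hks := emod_shift n hn1 (i - (i₀:ℤ))
        have hr0 : 0 ≤ (i - (i₀:ℤ)) % (2*(n:ℤ)) := Int.emod_nonneg _ (by omega)
        have hr1 : (i - (i₀:ℤ)) % (2*(n:ℤ)) < 2*(n:ℤ) := Int.emod_lt_of_pos _ (by omega)
        simp only [hv_def]
        rw [show i + (n:ℤ) - (i₀:ℤ) = (i - (i₀:ℤ)) + n from by ring, hks]
        set r := (i - (i₀:ℤ)) % (2*(n:ℤ)) with hrd
        clear_value r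
        clear hrd hks
        split_ifs <;> (try (exfalso; omega)) <;> norm_num
      have hvi₀ : v ((i₀:ℕ):ℤ) = 1 := by
        simp only [hv_def]
        rw [if_pos (by simp)]
      have hvzero : ∀ b : ℕ, b < n → b ≠ i₀ → v ((b:ℕ):ℤ) = 0 := by
        intro b hb hbne
        have hd : ((b:ℤ) - (i₀:ℤ)) % (2*(n:ℤ)) ≠ 0 ∧ ((b:ℤ) - (i₀:ℤ)) % (2*(n:ℤ)) ≠ (n:ℤ) := by
          rcases le_or_gt (i₀:ℤ) (b:ℤ) with hle | hlt
          · rw [Int.emod_eq_of_lt (by omega) (by omega)]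
            omega
          · have he : ((b:ℤ) - (i₀:ℤ)) % (2*(n:ℤ)) = ((b:ℤ) - (i₀:ℤ) + 2*(n:ℤ)) % (2*(n:ℤ)) := by
              rw [show (b:ℤ) - (i₀:ℤ) + 2*(n:ℤ) = ((b:ℤ) - (i₀:ℤ)) + (2*(n:ℤ))*1 from by ring,
                Int.add_mul_emod_self_left]
            rw [he, Int.emod_eq_of_lt (by omega) (by omega)]
            omega
        simp only [hv_def]
        rw [if_neg hd.1, if_neg hd.2]
      have hvbnd : ∀ i : ℤ, |v i| ≤ 1 := by
        intro i
        simp only [hv_def]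
        split_ifs <;> norm_num
      set A : ℝ := ∑ i ∈ Finset.range n, (c (i:ℤ) * v (i:ℤ)^2 - 2*v (i:ℤ)*v ((i:ℤ)+1)) with hAdef
      set B : ℝ := ∑ i ∈ Finset.range n,
        (2*c (i:ℤ)*U (i:ℤ)*v (i:ℤ) - 2*U (i:ℤ)*v ((i:ℤ)+1) - 2*v (i:ℤ)*U ((i:ℤ)+1)) with hBdef
      set ε : ℝ := min (U k) (U (k+(n:ℤ)-1)) with hεdef
      have hε : 0 < ε := lt_min hU0 hU1
      have key : ∀ t : ℝ, |t| < ε → 0 ≤ t * B + t^2 * A := by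
        intro t ht
        set u' : ℤ → ℝ := fun i => U i + t * v i with hu'def
        have hu'anti : ∀ i : ℤ, u' (i+(n:ℤ)) = -u' i := by
          intro i; simp only [hu'def]; rw [hUa i, hvanti i]; ring
        have habs : ∀ i : ℤ, -|t| ≤ t * v i ∧ t * v i ≤ |t| := by
          intro i
          have h1 : |t * v i| ≤ |t| := by
            rw [abs_mul]
            calc |t| * |v i| ≤ |t| * 1 := mul_le_mul_of_nonneg_left (hvbnd i) (abs_nonneg t)
              _ = |t| := mul_one _
          exact ⟨by linarith [neg_abs_le (t * v i)], by linarith [le_abs_self (t * v i)]⟩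
        have hk0' : 0 < u' k := by
          have h1 := (habs k).1
          have h2 : ε ≤ U k := min_le_left _ _
          simp only [hu'def]
          linarith
        have hk1' : 0 < u' (k+(n:ℤ)-1) := by
          have h1 := (habs (k+(n:ℤ)-1)).1
          have h2 : ε ≤ U (k+(n:ℤ)-1) := min_le_right _ _
          simp only [hu'def]
          linarith
        have hwin := (window_lemma n hn V c u' hrecP hstar' hsym hu'anti k hk0' hk1').1
        have hps := pshift n hn1 (fun i => c i * u' i^2 - 2*u' i*u' (i+1)) (hper u' hu'anti) k
        have h0 : 0 ≤ ∑ i ∈ Finset.range n, (c (i:ℤ) * u' (i:ℤ)^2 - 2*u' (i:ℤ)*u' ((i:ℤ)+1)) := by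
          calc (0:ℝ) ≤ ∑ i ∈ Finset.range n,
              (c (k+(i:ℤ)) * u' (k+(i:ℤ))^2 - 2*u' (k+(i:ℤ))*u' (k+(i:ℤ)+1)) := hwin
            _ = _ := hps
        have hexp : ∑ i ∈ Finset.range n, (c (i:ℤ) * u' (i:ℤ)^2 - 2*u' (i:ℤ)*u' ((i:ℤ)+1))
            = (∑ i ∈ Finset.range n, (c (i:ℤ) * U (i:ℤ)^2 - 2*U (i:ℤ)*U ((i:ℤ)+1)))
              + (t * B + t^2 * A) := by
          have hterm : ∀ i : ℕ, c (i:ℤ) * u' (i:ℤ)^2 - 2*u' (i:ℤ)*u' ((i:ℤ)+1)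
              = (c (i:ℤ) * U (i:ℤ)^2 - 2*U (i:ℤ)*U ((i:ℤ)+1))
                + (t * (2*c (i:ℤ)*U (i:ℤ)*v (i:ℤ) - 2*U (i:ℤ)*v ((i:ℤ)+1) - 2*v (i:ℤ)*U ((i:ℤ)+1))
                + t^2 * (c (i:ℤ) * v (i:ℤ)^2 - 2*v (i:ℤ)*v ((i:ℤ)+1))) := by
            intro i; simp only [hu'def]; ring
          rw [Finset.sum_congr rfl fun i _ => hterm i, Finset.sum_add_distrib,
            Finset.sum_add_distrib, ← Finset.mul_sum, ← Finset.mul_sum, hAdef, hBdef]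
        rw [hexp, hUT, zero_add] at h0
        exact h0
      have hB0 : B = 0 := small_param A B ε hε key
      set C : ℝ := ∑ i ∈ Finset.range n,
        (v (i:ℤ) * (c (i:ℤ)*U (i:ℤ) - U ((i:ℤ)+1) - U ((i:ℤ)-1))) with hCdef
      have hshift2 : ∑ i ∈ Finset.range n, U ((i:ℤ)-1) * v (i:ℤ)
          = ∑ i ∈ Finset.range n, U (i:ℤ) * v ((i:ℤ)+1) := by
        have hgper : ∀ i : ℤ, U ((i+(n:ℤ))-1) * v (i+(n:ℤ)) = U (i-1) * v i := by
          intro i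
          rw [show i+(n:ℤ)-1 = (i-1)+(n:ℤ) from by ring, hUa (i-1), hvanti i]
          ring
        have hps2 := pshift n hn1 (fun i => U (i-1) * v i) hgper 1
        rw [← hps2]
        refine Finset.sum_congr rfl fun i _ => ?_
        beta_reduce
        rw [show (1:ℤ)+(i:ℤ)-1 = (i:ℤ) from by ring, add_comm (1:ℤ) (i:ℤ)]
      have hBC : B = 2 * C := by
        have h1 : B - 2*C = ∑ i ∈ Finset.range n,
            (2*(U ((i:ℤ)-1)*v (i:ℤ)) - 2*(U (i:ℤ)*v ((i:ℤ)+1))) := by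
          rw [hBdef, hCdef, Finset.mul_sum, ← Finset.sum_sub_distrib]
          exact Finset.sum_congr rfl fun i _ => by ring
        have h2 : ∑ i ∈ Finset.range n,
            (2*(U ((i:ℤ)-1)*v (i:ℤ)) - 2*(U (i:ℤ)*v ((i:ℤ)+1)))
            = 2*(∑ i ∈ Finset.range n, U ((i:ℤ)-1)*v (i:ℤ))
              - 2*(∑ i ∈ Finset.range n, U (i:ℤ)*v ((i:ℤ)+1)) := by
          rw [Finset.sum_sub_distrib, ← Finset.mul_sum, ← Finset.mul_sum]
        rw [h2, hshift2] at h1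
        linarith
      have hC0 : C = 0 := by linarith [hBC, hB0]
      have hCsingle : C = v ((i₀:ℕ):ℤ) * (c ((i₀:ℕ):ℤ)*U ((i₀:ℕ):ℤ)
          - U (((i₀:ℕ):ℤ)+1) - U (((i₀:ℕ):ℤ)-1)) := by
        rw [hCdef]
        refine Finset.sum_eq_single_of_mem i₀ (Finset.mem_range.mpr hi₀) fun b hb hbne => ?_
        rw [hvzero b (Finset.mem_range.mp hb) hbne]
        ring
      rw [hvi₀, one_mul] at hCsingle
      have hrec := hUr ((i₀:ℕ):ℤ)
      have hUnz := hUn ((i₀:ℕ):ℤ)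
      have hfin : c ((i₀:ℕ):ℤ) * U ((i₀:ℕ):ℤ) = (2*Real.cos (Real.pi/n)) * U ((i₀:ℕ):ℤ) := by
        rw [hC0] at hCsingle
        linarith
      exact mul_right_cancel₀ hUnz hfin
    -- apply hgen to the (possibly negated) first test sequence
    have hres : ∀ i₀ : ℕ, i₀ < n → c (i₀:ℤ) = 2*Real.cos (Real.pi/n) := by
      obtain ⟨k, hcase⟩ := sign_change n hn (SchD.uu n ((0:ℕ):ℤ)) (hUanti _) (hUne _)
      rcases hcase with ⟨h0, h1⟩ | ⟨h0, h1⟩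
      · exact hgen (SchD.uu n ((0:ℕ):ℤ)) (hUanti _) (hUne _)
          (fun i => SchD.uu_rec n hn _ i) k h0 h1 hT00
      · refine hgen (fun i => -(SchD.uu n ((0:ℕ):ℤ) i)) ?_ ?_ ?_ k
          (by simpa using neg_pos.mpr h0) (by simpa using neg_pos.mpr h1) ?_
        · intro i; simp [hUanti _ i]
        · intro i; simpa using hUne _ i
        · intro i
          have := SchD.uu_rec n hn ((0:ℕ):ℤ) i
          beta_reduce
          linear_combination -this
        · rw [← hT00]
          exact Finset.sum_congr rfl fun i _ => by beta_reduce; ring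
    intro i
    have hdecomp : c i = c (i % (n:ℤ)) := by
      have hpe := pext n c hcper (i / (n:ℤ)) (i % (n:ℤ))
      rw [show i % (n:ℤ) + (i/(n:ℤ))*(n:ℤ) = i from by
        linear_combination Int.emod_add_mul_ediv i (n:ℤ)] at hpe
      exact hpe
    have h0 : 0 ≤ i % (n:ℤ) := Int.emod_nonneg i (by omega)
    have h1 : i % (n:ℤ) < (n:ℤ) := Int.emod_lt_of_pos i (by omega)
    have hres2 := hres (i % (n:ℤ)).toNat (by omega)
    rw [show (((i % (n:ℤ)).toNat : ℕ) : ℤ) = i % (n:ℤ) from by omega] at hres2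
    rw [hdecomp]
    exact hres2
  · intro hcall
    have hrw : ∑ i ∈ Finset.range n, c ((i:ℤ)+1) = ∑ _i ∈ Finset.range n, (2*Real.cos (Real.pi/n)) :=
      Finset.sum_congr rfl fun i _ => hcall _
    rw [hF, hrw, Finset.sum_const, Finset.card_range, nsmul_eq_mul]
    ring
end
end

section
/- Let V : ℤ → ℝ² satisfy [V_k, V_{k+1}] = 1 for all k, and set c_k = [V_{k−1}, V_{k+1}]. Then for all integers i, j with j ≥ i + 2, the cross-product F_{i,j} = [V_i, V_j] equals the determinant of the (j−i−1)×(j−i−1) tridiagonal matrix whose diagonal entries are c_{i+1}, c_{i+2}, …, c_{j−1} (in this order), whose entries immediately above and below the diagonal are all equal to 1, and whose remaining entries are 0. -/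
/-- The `m×m` tridiagonal matrix with diagonal entries `d 0, d 1, …, d (m−1)` (in this
order), entries immediately above and below the diagonal equal to `1`, and remaining
entries `0`. -/
def tridiag (m : ℕ) (d : ℕ → ℝ) : Matrix (Fin m) (Fin m) ℝ :=
  Matrix.of fun k l =>
    if (k : ℕ) = (l : ℕ) then d k
    else if (k : ℕ) + 1 = (l : ℕ) ∨ (l : ℕ) + 1 = (k : ℕ) then 1 else 0

/-- Laplace expansion of the tridiagonal determinant along the first row. -/
lemma tridiag_rec (m : ℕ) (d : ℕ → ℝ) :
    (tridiag (m+2) d).det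
      = d 0 * (tridiag (m+1) (fun k => d (k+1))).det
        - (tridiag m (fun k => d (k+2))).det := by
  rw [Matrix.det_succ_row_zero, Fin.sum_univ_succ, Fin.sum_univ_succ]
  have hz : ∀ j : Fin m, (tridiag (m+2) d) 0 j.succ.succ = 0 := by
    intro j
    simp only [tridiag, Matrix.of_apply, Fin.val_zero, Fin.val_succ]
    split_ifs <;> first | rfl | omega | simp_all
  rw [Finset.sum_eq_zero (fun j _ => by rw [hz j]; ring)]
  have h00 : (tridiag (m+2) d) 0 0 = d 0 := by simp [tridiag]
  have h01 : (tridiag (m+2) d) 0 ((0 : Fin (m+1)).succ) = 1 := by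
    simp only [tridiag, Matrix.of_apply, Fin.val_zero, Fin.val_succ]
    split_ifs <;> first | rfl | omega | simp_all
  rw [h00, h01]
  -- first minor
  have hA : (tridiag (m+2) d).submatrix Fin.succ ((0 : Fin (m+2)).succAbove)
      = tridiag (m+1) (fun k => d (k+1)) := by
    ext k l
    simp only [Matrix.submatrix_apply, Fin.succAbove_zero, tridiag, Matrix.of_apply,
      Fin.val_succ]
    rcases eq_or_ne (k : ℕ) (l : ℕ) with h | h
    · rw [if_pos (by omega), if_pos h]
    · rw [if_neg (by omega), if_neg h]
      have h2 : ((k:ℕ)+1+1 = (l:ℕ)+1 ∨ (l:ℕ)+1+1 = (k:ℕ)+1) ↔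
          ((k:ℕ)+1 = (l:ℕ) ∨ (l:ℕ)+1 = (k:ℕ)) := by omega
      rw [if_congr h2 rfl rfl]
  -- second minor
  have hB : ((tridiag (m+2) d).submatrix Fin.succ (((0:Fin (m+1)).succ).succAbove)).det
      = (tridiag m (fun k => d (k+2))).det := by
    rw [Matrix.det_succ_column_zero, Fin.sum_univ_succ]
    have hc0 : ∀ k : Fin m,
        (tridiag (m+2) d).submatrix Fin.succ (((0:Fin (m+1)).succ).succAbove) k.succ 0 = 0 := by
      intro k
      have hcv : ((((0:Fin (m+1)).succ).succAbove 0 : Fin (m+2)) : ℕ) = 0 := by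
        simp [Fin.succAbove, Fin.lt_iff_val_lt_val]
      simp only [Matrix.submatrix_apply, tridiag, Matrix.of_apply, Fin.val_succ, hcv]
      split_ifs <;> first | rfl | omega | simp_all
    rw [Finset.sum_eq_zero (fun k _ => by rw [hc0 k]; ring)]
    have hb00 : (tridiag (m+2) d).submatrix Fin.succ (((0:Fin (m+1)).succ).succAbove) 0 0
        = 1 := by
      have hcv : ((((0:Fin (m+1)).succ).succAbove 0 : Fin (m+2)) : ℕ) = 0 := by
        simp [Fin.succAbove, Fin.lt_iff_val_lt_val]
      have hrv : ((Fin.succ (0 : Fin (m+1)) : Fin (m+2)) : ℕ) = 1 := by simp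
      simp only [Matrix.submatrix_apply, tridiag, Matrix.of_apply, hcv, hrv]
      split_ifs <;> first | rfl | omega | simp_all
    have hM : ((tridiag (m+2) d).submatrix Fin.succ
          (((0:Fin (m+1)).succ).succAbove)).submatrix ((0 : Fin (m+1)).succAbove) Fin.succ
        = tridiag m (fun k => d (k+2)) := by
      ext k l
      have hcol : ((((0:Fin (m+1)).succ).succAbove l.succ : Fin (m+2)) : ℕ) = (l : ℕ) + 2 := by
        simp [Fin.succAbove, Fin.lt_iff_val_lt_val]
      simp only [Matrix.submatrix_apply, Fin.succAbove_zero, tridiag, Matrix.of_apply,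
        Fin.val_succ, hcol]
      rcases eq_or_ne (k : ℕ) (l : ℕ) with h | h
      · rw [if_pos (by omega), if_pos h]
      · rw [if_neg (by omega), if_neg h]
        have h2 : ((k:ℕ)+1+1+1 = (l:ℕ)+2 ∨ (l:ℕ)+2+1 = (k:ℕ)+1+1) ↔
            ((k:ℕ)+1 = (l:ℕ) ∨ (l:ℕ)+1 = (k:ℕ)) := by omega
        rw [if_congr h2 rfl rfl]
    rw [hb00, hM]
    simp
  rw [hA, hB]
  simp only [Fin.val_zero, Fin.val_succ, pow_zero, pow_one, zero_add]
  ring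

/-- The three-term recurrence `V (k+1) = c k • V k − V (k−1)` (discrete Hill equation). -/
lemma vrec (V : ℤ → ℝ × ℝ) (hunit : ∀ k : ℤ, areaForm (V k) (V (k + 1)) = 1)
    (c : ℤ → ℝ) (hc : ∀ k : ℤ, c k = areaForm (V (k - 1)) (V (k + 1))) (k : ℤ) :
    V (k + 1) = c k • V k - V (k - 1) := by
  have h1 := hunit (k - 1)
  rw [show k - 1 + 1 = k by ring] at h1
  have h2 := hunit k
  have hck := hc k
  simp only [areaForm] at h1 h2 hck
  have e1 : (V (k+1)).1 = c k * (V k).1 - (V (k-1)).1 := by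
    rw [hck]; linear_combination (-(V (k+1)).1) * h1 - (V (k-1)).1 * h2
  have e2 : (V (k+1)).2 = c k * (V k).2 - (V (k-1)).2 := by
    rw [hck]; linear_combination (-(V (k+1)).2) * h1 - (V (k-1)).2 * h2
  ext
  · simpa using e1
  · simpa using e2

/-- Main induction. -/
lemma key (V : ℤ → ℝ × ℝ) (hunit : ∀ k : ℤ, areaForm (V k) (V (k + 1)) = 1)
    (c : ℤ → ℝ) (hc : ∀ k : ℤ, c k = areaForm (V (k - 1)) (V (k + 1))) :
    ∀ m : ℕ, ∀ i : ℤ,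
      (tridiag m (fun k => c (i + 1 + (k : ℤ)))).det = areaForm (V i) (V (i + 1 + m)) := by
  intro m
  induction m using Nat.strong_induction_on with
  | _ m ih =>
    match m with
    | 0 =>
      intro i
      rw [Matrix.det_fin_zero]
      push_cast
      rw [add_zero]
      exact (hunit i).symm
    | 1 =>
      intro i
      rw [Matrix.det_fin_one]
      have := hc (i + 1)
      simp only [tridiag, Matrix.of_apply]
      norm_num
      rw [this, show i + 1 - 1 = i by ring, show i + 1 + 1 = i + 1 + (1:ℕ) by push_cast; ring]
    | (m+2) =>
      intro i
      rw [tridiag_rec]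
      have e1 : (fun k : ℕ => (fun k : ℕ => c (i + 1 + (k : ℤ))) (k+1))
          = fun k : ℕ => c ((i+1) + 1 + (k : ℤ)) := by
        funext k; congr 1; push_cast; ring
      have e2 : (fun k : ℕ => (fun k : ℕ => c (i + 1 + (k : ℤ))) (k+2))
          = fun k : ℕ => c ((i+2) + 1 + (k : ℤ)) := by
        funext k; congr 1; push_cast; ring
      rw [e1, e2, ih (m+1) (by omega) (i+1), ih m (by omega) (i+2)]
      have hv := vrec V hunit c hc (i + 1)
      rw [show i + 1 + 1 = i + 2 by ring, show i + 1 - 1 = i by ring] at hv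
      have h1 : (V (i+2)).1 = c (i+1) * (V (i+1)).1 - (V i).1 := by
        rw [hv]; simp
      have h2 : (V (i+2)).2 = c (i+1) * (V (i+1)).2 - (V i).2 := by
        rw [hv]; simp
      have harg0 : i + 1 + ((0:ℕ) : ℤ) = i + 1 := by push_cast; ring
      have hw1 : i + 1 + 1 + ((m+1 : ℕ) : ℤ) = i + 1 + ((m+2 : ℕ) : ℤ) := by push_cast; ring
      have hw2 : i + 2 + 1 + ((m : ℕ) : ℤ) = i + 1 + ((m+2 : ℕ) : ℤ) := by push_cast; ring
      rw [harg0, hw1, hw2]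
      simp only [areaForm, h1, h2]
      ring

/-- **Lemma (tridiagonal determinant formula).** If `V : ℤ → ℝ²` satisfies
`[V k, V (k+1)] = 1` for all `k` and `c k = [V (k−1), V (k+1)]`, then for `j ≥ i + 2`
the cross-product `F_{i,j} = [V i, V j]` is the determinant of the
`(j−i−1)×(j−i−1)` tridiagonal matrix with diagonal `c (i+1), …, c (j−1)` and
off-diagonal entries `1`. -/
theorem crossproduct_eq_tridiag_det (V : ℤ → ℝ × ℝ)
    (hunit : ∀ k : ℤ, areaForm (V k) (V (k + 1)) = 1)
    (c : ℤ → ℝ) (hc : ∀ k : ℤ, c k = areaForm (V (k - 1)) (V (k + 1)))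
    (i j : ℤ) (hij : i + 2 ≤ j) :
    areaForm (V i) (V j) = (tridiag (j - i - 1).toNat (fun k => c (i + 1 + k))).det := by
  have hm : ((j - i - 1).toNat : ℤ) = j - i - 1 := Int.toNat_of_nonneg (by omega)
  have := key V hunit c hc (j - i - 1).toNat i
  rw [show i + 1 + ((j - i - 1).toNat : ℤ) = j by omega] at this
  exact this.symm
end

section
/- Let n ≥ 1 and let V : ℤ → ℝ² be n-periodic up to sign or cyclic (indices taken mod n) such that for every k the vectors V_{k−1} and V_{k+1} are linearly independent and V_k ≠ 0. If λ_0, …, λ_{n−1} ∈ ℝ (indices mod n) satisfy, for every choice of vectors ξ_0, …, ξ_{n−1} ∈ ℝ² (indices mod n), Σ_{i=0}^{n−1} λ_i ([ξ_i, V_{i+1}] + [V_i, ξ_{i+1}]) = 0, then λ_i = 0 for all i. Consequently the differentials of the n constraint functions φ_i(V) = [V_i, V_{i+1}] are linearly independent at every such configuration, so the constraint set {φ_i = 1, i = 0,…,n−1} is a smooth submanifold of (ℝ²)ⁿ of dimension n. -/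
/-- **Lemma (independence of the constraint differentials).** Let `V` be a cyclic
configuration of planar vectors (indices mod `n`) such that for every `k` the vectors
`V (k−1)` and `V (k+1)` are linearly independent and `V k ≠ 0`. If scalars
`λ 0, …, λ (n−1)` satisfy `∑ i, λ i · ([ξ i, V (i+1)] + [V i, ξ (i+1)]) = 0` for every
choice of test vectors `ξ`, then all `λ i = 0`; i.e. the differentials of the constraint
functions `φ i (V) = [V i, V (i+1)]` are linearly independent at `V`, so the constraint
set `{φ i = 1}` is a smooth `n`-dimensional submanifold of `(ℝ²)ⁿ`. -/
theorem constraint_differentials_independent (n : ℕ) [NeZero n] (hn : 1 ≤ n)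
    (V : ZMod n → ℝ × ℝ)
    (hindep : ∀ k : ZMod n, LinearIndependent ℝ ![V (k - 1), V (k + 1)])
    (hne : ∀ k : ZMod n, V k ≠ 0)
    (lam : ZMod n → ℝ)
    (hlam : ∀ ξ : ZMod n → ℝ × ℝ,
      ∑ i : ZMod n, lam i * (areaForm (ξ i) (V (i + 1)) + areaForm (V i) (ξ (i + 1))) = 0) :
    ∀ i : ZMod n, lam i = 0 := by
  intro j
  by_cases h2 : (2 : ZMod n) = 0
  · -- degenerate case: k + 1 = k - 1 for all k, contradicting linear independence
    exfalso
    have h1 : (0 : ZMod n) + 1 = 0 - 1 := by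
      have : (1 : ZMod n) = -1 := by
        have := h2
        linear_combination this
      simpa using this
    have hind := hindep 0
    rw [← h1] at hind
    have := hind.eq_zero_of_pair (s := 1) (t := -1) (by simp)
    exact one_ne_zero this.1
  · have h10 : (1 : ZMod n) ≠ 0 := by
      intro h
      apply h2
      linear_combination (2 : ZMod n) * h
    have hjj : j - 1 ≠ j := by
      intro h
      apply h10
      linear_combination -h
    -- key equation: for all w, lam j [w, V (j+1)] + lam (j-1) [V (j-1), w] = 0
    have key : ∀ w : ℝ × ℝ,
        lam j * areaForm w (V (j + 1)) + lam (j - 1) * areaForm (V (j - 1)) w = 0 := by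
      intro w
      have h := hlam (fun i => if i = j then w else 0)
      rw [show (Finset.univ : Finset (ZMod n)) = insert (j - 1) {j} ∪
          (Finset.univ \ insert (j - 1) {j}) by
        rw [Finset.union_sdiff_of_subset (Finset.subset_univ _)]] at h
      rw [Finset.sum_union (Finset.disjoint_sdiff)] at h
      have hz : ∑ i ∈ Finset.univ \ insert (j - 1) {j},
          lam i * (areaForm ((fun i => if i = j then w else 0) i) (V (i + 1)) +
            areaForm (V i) ((fun i => if i = j then w else 0) (i + 1))) = 0 := by
        apply Finset.sum_eq_zero
        intro i hi
        simp only [Finset.mem_sdiff, Finset.mem_insert, Finset.mem_singleton] at hi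
        push_neg at hi
        have hij : i ≠ j := hi.2.2
        have hij1 : i + 1 ≠ j := by
          intro h'
          exact hi.2.1 (eq_sub_of_add_eq h')
        simp [hij, hij1, areaForm]
      rw [hz, add_zero, Finset.sum_insert (by simpa using hjj),
        Finset.sum_singleton] at h
      have e1 : j - 1 + 1 = j := by ring
      have e2 : j + 1 ≠ j := by
        intro h'
        exact h10 (by linear_combination h')
      simp only [e1, if_neg hjj, if_pos rfl, if_neg e2, ite_true, ite_false, areaForm,
        Prod.fst_zero, Prod.snd_zero] at h ⊢
      ring_nf at h ⊢
      linarith [h]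
    have e1 := key (1, 0)
    have e2 := key (0, 1)
    simp only [areaForm] at e1 e2
    have hvec : (-(lam (j - 1))) • V (j - 1) + (lam j) • V (j + 1) = 0 := by
      apply Prod.ext <;> simp <;> nlinarith [e1, e2]
    exact ((hindep j).eq_zero_of_pair hvec).2
end

section
/- Let f : ℝ → ℝ be twice differentiable with f′(t) > 0 for all t, and define γ : ℝ → ℝ² by γ(t) = (f′(t))^{−1/2}·(cos f(t), sin f(t)). Then γ satisfies the unit Wronskian condition [γ(t), γ′(t)] = 1 for all t. -/
/-- **Lemma (unit Wronskian of the standard lift).** If `f : ℝ → ℝ` is twice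
differentiable with `f′ > 0` and `γ(t) = (f′ t)^(−1/2) · (cos (f t), sin (f t))`, then
`[γ t, γ′ t] = 1` for all `t`. -/
theorem unit_wronskian_of_lift (f : ℝ → ℝ)
    (hf : Differentiable ℝ f) (hf' : Differentiable ℝ (deriv f))
    (hpos : ∀ t, 0 < deriv f t)
    (γ : ℝ → ℝ × ℝ)
    (hγ : ∀ t, γ t = (Real.sqrt (deriv f t))⁻¹ • (Real.cos (f t), Real.sin (f t))) :
    ∀ t, areaForm (γ t) (deriv γ t) = 1 := by
  intro t
  have ha : 0 < deriv f t := hpos t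
  have hsq : 0 < Real.sqrt (deriv f t) := Real.sqrt_pos.2 ha
  -- derivative of g = (sqrt ∘ deriv f)⁻¹
  have h1 : HasDerivAt (fun s => Real.sqrt (deriv f s))
      (deriv (deriv f) t / (2 * Real.sqrt (deriv f t))) t := by
    have := (Real.hasDerivAt_sqrt (ne_of_gt ha)).comp t (hf' t).hasDerivAt
    simpa [div_eq_inv_mul, mul_comm, Function.comp_def] using this
  have hg : HasDerivAt (fun s => (Real.sqrt (deriv f s))⁻¹)
      (-(deriv (deriv f) t / (2 * Real.sqrt (deriv f t))) / (Real.sqrt (deriv f t))^2) t :=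
    h1.inv (ne_of_gt hsq)
  set d : ℝ := -(deriv (deriv f) t / (2 * Real.sqrt (deriv f t))) / (Real.sqrt (deriv f t))^2
  have hcos : HasDerivAt (fun s => Real.cos (f s)) (-Real.sin (f t) * deriv f t) t :=
    (Real.hasDerivAt_cos (f t)).comp t (hf t).hasDerivAt
  have hsin : HasDerivAt (fun s => Real.sin (f s)) (Real.cos (f t) * deriv f t) t :=
    (Real.hasDerivAt_sin (f t)).comp t (hf t).hasDerivAt
  have hx := hg.mul hcos
  have hy := hg.mul hsin
  have hγfun : γ = fun s => ((Real.sqrt (deriv f s))⁻¹ * Real.cos (f s),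
      (Real.sqrt (deriv f s))⁻¹ * Real.sin (f s)) := by
    funext s
    rw [hγ s]
    simp [Prod.smul_def, smul_eq_mul]
  have hder : HasDerivAt γ
      (d * Real.cos (f t) + (Real.sqrt (deriv f t))⁻¹ * (-Real.sin (f t) * deriv f t),
       d * Real.sin (f t) + (Real.sqrt (deriv f t))⁻¹ * (Real.cos (f t) * deriv f t)) t := by
    rw [hγfun]
    exact HasDerivAt.prodMk hx hy
  rw [hγ t, hder.deriv]
  have hs2 : Real.sqrt (deriv f t) * Real.sqrt (deriv f t) = deriv f t :=
    Real.mul_self_sqrt (le_of_lt ha)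
  have hpy : Real.sin (f t) ^ 2 + Real.cos (f t) ^ 2 = 1 := Real.sin_sq_add_cos_sq (f t)
  simp only [areaForm, Prod.smul_def, smul_eq_mul]
  field_simp
  nlinarith [hs2, hpy, sq_nonneg (Real.sqrt (deriv f t))]
end

section
/- Fix α ∈ (0, π) and let g : ℝ → ℝ be a smooth function with g(t+π) = g(t) for all t. For ε ∈ ℝ small enough that 1 + ε·g′(t) > 0 for all t, define φ(ε) = (1/π)∫₀^π sin(α + ε(g(t+α) − g(t))) / √((1 + ε·g′(t+α))(1 + ε·g′(t))) dt. Then φ(0) = sin α and φ is differentiable at ε = 0 with φ′(0) = 0. (That is, the round circle, and hence every central ellipse, is a critical point of the functional I(α).) -/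
open Real MeasureTheory Metric Filter intervalIntegral

/-- **Lemma (central ellipses are critical points).** Fix `α ∈ (0, π)` and a smooth
`π`-periodic function `g`. For `ε` small enough that `1 + ε·g′ > 0`, let
`φ ε = (1/π) ∫₀^π sin (α + ε (g (t+α) − g t)) / √((1 + ε g′(t+α))(1 + ε g′ t)) dt`,
the value of the chord functional `I(α)` along the perturbation `f_ε(t) = t + ε g t`
of the identity. Then `φ 0 = sin α` and `φ` has derivative `0` at `ε = 0`. -/
theorem circle_is_critical (α : ℝ) (hα : α ∈ Set.Ioo 0 Real.pi)
    (g : ℝ → ℝ) (hg : ContDiff ℝ (⊤ : ℕ∞) g) (hper : ∀ t, g (t + Real.pi) = g t)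
    (φ : ℝ → ℝ)
    (hφ : ∀ ε : ℝ, (∀ t, 0 < 1 + ε * deriv g t) →
      φ ε = (1 / Real.pi) * ∫ t in (0:ℝ)..Real.pi,
        Real.sin (α + ε * (g (t + α) - g t)) /
          Real.sqrt ((1 + ε * deriv g (t + α)) * (1 + ε * deriv g t))) :
    φ 0 = Real.sin α ∧ HasDerivAt φ 0 0 := by
  have hπ : (0:ℝ) < Real.pi := Real.pi_pos
  have hπ' : Real.pi ≠ 0 := ne_of_gt hπ
  have hgc : Continuous g := hg.continuous
  have hgdiff : Differentiable ℝ g := hg.differentiable (by simp)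
  have hg'c : Continuous (deriv g) := hg.continuous_deriv (by simp)
  have hperG : Function.Periodic g Real.pi := hper
  have hperG' : Function.Periodic (deriv g) Real.pi := by
    intro t
    have h1 : (fun s => g (s + Real.pi)) = g := funext hper
    calc deriv g (t + Real.pi) = deriv (fun s => g (s + Real.pi)) t :=
          (deriv_comp_add_const g Real.pi t).symm
      _ = deriv g t := by rw [h1]
  -- global bounds
  obtain ⟨K, hK⟩ := isBounded_iff_forall_norm_le.mp (hperG.isBounded_of_continuous hπ' hgc)
  obtain ⟨M, hM⟩ := isBounded_iff_forall_norm_le.mp (hperG'.isBounded_of_continuous hπ' hg'c)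
  have hK' : ∀ t, |g t| ≤ K := fun t => hK _ ⟨t, rfl⟩
  have hM' : ∀ t, |deriv g t| ≤ M := fun t => hM _ ⟨t, rfl⟩
  have hK0 : 0 ≤ K := le_trans (abs_nonneg _) (hK' 0)
  have hM0 : 0 ≤ M := le_trans (abs_nonneg _) (hM' 0)
  set δ : ℝ := 1 / (2 * (M + 1)) with hδdef
  have hδ : 0 < δ := by positivity
  -- on the ball of radius δ the square roots are well behaved
  have key : ∀ ε : ℝ, ε ∈ ball (0:ℝ) δ → ∀ t,
      1/2 ≤ 1 + ε * deriv g t ∧ 1 + ε * deriv g t ≤ 3/2 := by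
    intro ε hε t
    have h1 : |ε| < δ := by simpa [Real.norm_eq_abs] using mem_ball_zero_iff.mp hε
    have h2 : |ε * deriv g t| ≤ |ε| * M := by
      rw [abs_mul]; exact mul_le_mul_of_nonneg_left (hM' t) (abs_nonneg ε)
    have h3 : |ε| * M < 1/2 := by
      have : |ε| * M ≤ |ε| * (M + 1) := by nlinarith [abs_nonneg ε]
      have h4 : |ε| * (M + 1) < δ * (M + 1) := by nlinarith
      have h5 : δ * (M + 1) = 1/2 := by rw [hδdef]; field_simp
      linarith
    have := abs_lt.mp (lt_of_le_of_lt h2 h3)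
    constructor <;> linarith [this.1, this.2]
  have keypos : ∀ ε : ℝ, ε ∈ ball (0:ℝ) δ → ∀ t, 0 < 1 + ε * deriv g t :=
    fun ε hε t => lt_of_lt_of_le (by norm_num) (key ε hε t).1
  -- the integrand and its ε-derivative
  set F : ℝ → ℝ → ℝ := fun ε t =>
    Real.sin (α + ε * (g (t + α) - g t)) /
      Real.sqrt ((1 + ε * deriv g (t + α)) * (1 + ε * deriv g t)) with hF
  set F' : ℝ → ℝ → ℝ := fun ε t =>
    (Real.cos (α + ε * (g (t + α) - g t)) * (g (t + α) - g t) *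
        Real.sqrt ((1 + ε * deriv g (t + α)) * (1 + ε * deriv g t)) -
      Real.sin (α + ε * (g (t + α) - g t)) *
        (1 / (2 * Real.sqrt ((1 + ε * deriv g (t + α)) * (1 + ε * deriv g t))) *
          (deriv g (t + α) * (1 + ε * deriv g t) +
            (1 + ε * deriv g (t + α)) * deriv g t))) /
      Real.sqrt ((1 + ε * deriv g (t + α)) * (1 + ε * deriv g t)) ^ 2 with hF'
  -- value at 0
  have h00 : ∀ t, (0:ℝ) < 1 + 0 * deriv g t := by intro t; norm_num
  have hφ0 : φ 0 = Real.sin α := by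
    rw [hφ 0 h00]
    simp [intervalIntegral.integral_const]
  refine ⟨hφ0, ?_⟩
  -- sqrt bounds on the ball
  have sqrt_bounds : ∀ ε : ℝ, ε ∈ ball (0:ℝ) δ → ∀ t : ℝ,
      1/2 ≤ Real.sqrt ((1 + ε * deriv g (t + α)) * (1 + ε * deriv g t)) ∧
      Real.sqrt ((1 + ε * deriv g (t + α)) * (1 + ε * deriv g t)) ≤ 3/2 := by
    intro ε hε t
    obtain ⟨hu1, hu2⟩ := key ε hε (t + α)
    obtain ⟨hv1, hv2⟩ := key ε hε t
    have hP1 : (1/4:ℝ) ≤ (1 + ε * deriv g (t + α)) * (1 + ε * deriv g t) := by nlinarith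
    have hP2 : (1 + ε * deriv g (t + α)) * (1 + ε * deriv g t) ≤ 9/4 := by nlinarith
    constructor
    · have := Real.sqrt_le_sqrt hP1
      rwa [show (1/4:ℝ) = (1/2)^2 by norm_num, Real.sqrt_sq (by norm_num)] at this
    · have := Real.sqrt_le_sqrt hP2
      rwa [show (9/4:ℝ) = (3/2)^2 by norm_num, Real.sqrt_sq (by norm_num)] at this
  -- differentiability in ε of the integrand
  have hdiff : ∀ t : ℝ, ∀ ε ∈ ball (0:ℝ) δ, HasDerivAt (fun x => F x t) (F' ε t) ε := by
    intro t ε hε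
    have hu : HasDerivAt (fun x : ℝ => 1 + x * deriv g (t + α)) (deriv g (t + α)) ε :=
      (hasDerivAt_mul_const (deriv g (t + α))).const_add 1
    have hv : HasDerivAt (fun x : ℝ => 1 + x * deriv g t) (deriv g t) ε :=
      (hasDerivAt_mul_const (deriv g t)).const_add 1
    have hP : HasDerivAt (fun x : ℝ => (1 + x * deriv g (t + α)) * (1 + x * deriv g t))
        (deriv g (t + α) * (1 + ε * deriv g t) + (1 + ε * deriv g (t + α)) * deriv g t) ε :=
      hu.mul hv
    have hPpos : 0 < (1 + ε * deriv g (t + α)) * (1 + ε * deriv g t) :=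
      mul_pos (keypos ε hε (t + α)) (keypos ε hε t)
    have hD : HasDerivAt (fun x : ℝ =>
        Real.sqrt ((1 + x * deriv g (t + α)) * (1 + x * deriv g t)))
        (1 / (2 * Real.sqrt ((1 + ε * deriv g (t + α)) * (1 + ε * deriv g t))) *
          (deriv g (t + α) * (1 + ε * deriv g t) + (1 + ε * deriv g (t + α)) * deriv g t)) ε :=
      (Real.hasDerivAt_sqrt (ne_of_gt hPpos)).comp ε hP
    have hN : HasDerivAt (fun x : ℝ => Real.sin (α + x * (g (t + α) - g t)))
        (Real.cos (α + ε * (g (t + α) - g t)) * (g (t + α) - g t)) ε :=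
      (Real.hasDerivAt_sin _).comp ε ((hasDerivAt_mul_const (g (t + α) - g t)).const_add α)
    have hDne : Real.sqrt ((1 + ε * deriv g (t + α)) * (1 + ε * deriv g t)) ≠ 0 :=
      ne_of_gt (Real.sqrt_pos.mpr hPpos)
    exact hN.div hD hDne
  -- uniform bound for the derivative on the ball
  set C : ℝ := 12 * K + 12 * M with hCdef
  have hbound : ∀ t : ℝ, ∀ ε ∈ ball (0:ℝ) δ, ‖F' ε t‖ ≤ C := by
    intro t ε hε
    obtain ⟨hs1, hs2⟩ := sqrt_bounds ε hε t
    obtain ⟨hu1, hu2⟩ := key ε hε (t + α)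
    obtain ⟨hv1, hv2⟩ := key ε hε t
    set s := Real.sqrt ((1 + ε * deriv g (t + α)) * (1 + ε * deriv g t)) with hs
    have hΔ : |g (t + α) - g t| ≤ 2 * K := by
      have := hK' (t + α); have := hK' t
      have := abs_sub (g (t + α)) (g t)
      calc |g (t + α) - g t| ≤ |g (t + α)| + |g t| := abs_sub _ _
        _ ≤ 2 * K := by linarith [hK' (t + α), hK' t]
    have ha : |deriv g (t + α)| ≤ M := hM' (t + α)
    have hb : |deriv g t| ≤ M := hM' t
    have hcos : |Real.cos (α + ε * (g (t + α) - g t))| ≤ 1 := Real.abs_cos_le_one _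
    have hsin : |Real.sin (α + ε * (g (t + α) - g t))| ≤ 1 := Real.abs_sin_le_one _
    have ht1 : |Real.cos (α + ε * (g (t + α) - g t)) * (g (t + α) - g t) * s| ≤ 3 * K := by
      rw [abs_mul, abs_mul]
      have h1 : |s| = s := abs_of_nonneg (by linarith)
      rw [h1]
      calc |Real.cos (α + ε * (g (t + α) - g t))| * |g (t + α) - g t| * s
          ≤ 1 * (2 * K) * (3/2) := by
            apply mul_le_mul _ hs2 (by linarith) (by positivity)
            exact mul_le_mul hcos hΔ (abs_nonneg _) zero_le_one
        _ = 3 * K := by ring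
    have hP' : |deriv g (t + α) * (1 + ε * deriv g t) + (1 + ε * deriv g (t + α)) * deriv g t|
        ≤ 3 * M := by
      have h1 : |deriv g (t + α) * (1 + ε * deriv g t)| ≤ M * (3/2) := by
        rw [abs_mul]
        apply mul_le_mul ha _ (abs_nonneg _) hM0
        rw [abs_of_nonneg (by linarith)]; exact hv2
      have h2 : |(1 + ε * deriv g (t + α)) * deriv g t| ≤ (3/2) * M := by
        rw [abs_mul]
        apply mul_le_mul _ hb (abs_nonneg _) (by norm_num)
        rw [abs_of_nonneg (by linarith)]; exact hu2
      calc |deriv g (t + α) * (1 + ε * deriv g t) + (1 + ε * deriv g (t + α)) * deriv g t|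
          ≤ |deriv g (t + α) * (1 + ε * deriv g t)| + |(1 + ε * deriv g (t + α)) * deriv g t| :=
            abs_add_le _ _
        _ ≤ 3 * M := by linarith
    have hinv : |1 / (2 * s)| ≤ 1 := by
      rw [abs_of_nonneg (by positivity)]
      rw [div_le_one (by linarith)]
      linarith
    have ht2 : |Real.sin (α + ε * (g (t + α) - g t)) *
        (1 / (2 * s) * (deriv g (t + α) * (1 + ε * deriv g t) +
          (1 + ε * deriv g (t + α)) * deriv g t))| ≤ 3 * M := by
      rw [abs_mul, abs_mul]
      calc |Real.sin (α + ε * (g (t + α) - g t))| *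
            (|1 / (2 * s)| * |deriv g (t + α) * (1 + ε * deriv g t) +
              (1 + ε * deriv g (t + α)) * deriv g t|)
          ≤ 1 * (1 * (3 * M)) := by
            apply mul_le_mul hsin _ (by positivity) zero_le_one
            exact mul_le_mul hinv hP' (abs_nonneg _) zero_le_one
        _ = 3 * M := by ring
    have hnum : |Real.cos (α + ε * (g (t + α) - g t)) * (g (t + α) - g t) * s -
        Real.sin (α + ε * (g (t + α) - g t)) *
          (1 / (2 * s) * (deriv g (t + α) * (1 + ε * deriv g t) +
            (1 + ε * deriv g (t + α)) * deriv g t))| ≤ 3 * K + 3 * M := by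
      calc _ ≤ _ + _ := abs_sub _ _
        _ ≤ 3 * K + 3 * M := by linarith
    have hs2pos : (0:ℝ) < s ^ 2 := by positivity
    rw [Real.norm_eq_abs, hF']
    simp only []
    rw [abs_div, abs_of_nonneg (le_of_lt hs2pos), div_le_iff₀ hs2pos]
    have h4 : (1/4:ℝ) ≤ s ^ 2 := by nlinarith
    calc |Real.cos (α + ε * (g (t + α) - g t)) * (g (t + α) - g t) * s -
        Real.sin (α + ε * (g (t + α) - g t)) *
          (1 / (2 * s) * (deriv g (t + α) * (1 + ε * deriv g t) +
            (1 + ε * deriv g (t + α)) * deriv g t))| ≤ 3 * K + 3 * M := hnum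
      _ ≤ C * (1/4) := by rw [hCdef]; linarith
      _ ≤ C * s ^ 2 := by
          apply mul_le_mul_of_nonneg_left h4
          rw [hCdef]; positivity
  -- continuity of F x for x in the ball
  have hFcont : ∀ ε ∈ ball (0:ℝ) δ, Continuous (F ε) := by
    intro ε hε
    have hnum : Continuous (fun t => Real.sin (α + ε * (g (t + α) - g t))) :=
      Real.continuous_sin.comp (continuous_const.add (continuous_const.mul
        ((hgc.comp (continuous_id.add continuous_const)).sub hgc)))
    have hden : Continuous (fun t =>
        Real.sqrt ((1 + ε * deriv g (t + α)) * (1 + ε * deriv g t))) :=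
      Real.continuous_sqrt.comp (((continuous_const.add (continuous_const.mul
        (hg'c.comp (continuous_id.add continuous_const))))).mul
        (continuous_const.add (continuous_const.mul hg'c)))
    exact hnum.div hden fun t => ne_of_gt (Real.sqrt_pos.mpr
      (mul_pos (keypos ε hε (t + α)) (keypos ε hε t)))
  -- simplified form of F' 0
  have hF'0 : F' 0 = fun t => Real.cos α * (g (t + α) - g t) -
      Real.sin α * ((deriv g (t + α) + deriv g t) / 2) := by
    funext t
    rw [hF']
    simp only [zero_mul, add_zero, mul_zero, mul_one, one_mul, Real.sqrt_one, one_pow, div_one]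
    ring
  -- the integral of F' 0 vanishes
  have hint1 : (∫ t in (0:ℝ)..Real.pi, (g (t + α) - g t)) = 0 := by
    have hgi : IntervalIntegrable g volume 0 Real.pi := hgc.intervalIntegrable _ _
    have hgαi : IntervalIntegrable (fun t => g (t + α)) volume 0 Real.pi :=
      (hgc.comp (continuous_id.add continuous_const)).intervalIntegrable _ _
    rw [intervalIntegral.integral_sub hgαi hgi]
    rw [intervalIntegral.integral_comp_add_right g α]
    have := hperG.intervalIntegral_add_eq α 0
    simp only [zero_add] at this
    rw [show (0:ℝ) + α = α by ring, show Real.pi + α = α + Real.pi by ring, this, sub_self]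
  have hint2 : (∫ t in (0:ℝ)..Real.pi, deriv g t) = 0 := by
    rw [intervalIntegral.integral_deriv_eq_sub (fun x _ => hgdiff x)
      (hg'c.intervalIntegrable _ _)]
    have := hper 0
    rw [zero_add] at this
    rw [this, sub_self]
  have hint3 : (∫ t in (0:ℝ)..Real.pi, deriv g (t + α)) = 0 := by
    rw [intervalIntegral.integral_comp_add_right (deriv g) α]
    have hd : ∀ x ∈ Set.uIcc ((0:ℝ) + α) (Real.pi + α), DifferentiableAt ℝ g x :=
      fun x _ => hgdiff x
    rw [intervalIntegral.integral_deriv_eq_sub hd (hg'c.intervalIntegrable _ _)]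
    have := hper α
    rw [show Real.pi + α = α + Real.pi by ring, show (0:ℝ) + α = α by ring, this, sub_self]
  have hintF'0 : (∫ t in (0:ℝ)..Real.pi, F' 0 t) = 0 := by
    rw [hF'0]
    have h1 : IntervalIntegrable (fun t => Real.cos α * (g (t + α) - g t)) volume 0 Real.pi :=
      (continuous_const.mul ((hgc.comp (continuous_id.add continuous_const)).sub
        hgc)).intervalIntegrable _ _
    have h2 : IntervalIntegrable (fun t => Real.sin α * ((deriv g (t + α) + deriv g t) / 2))
        volume 0 Real.pi :=
      (continuous_const.mul (((hg'c.comp (continuous_id.add continuous_const)).add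
        hg'c).div_const 2)).intervalIntegrable _ _
    rw [intervalIntegral.integral_sub h1 h2, intervalIntegral.integral_const_mul,
      intervalIntegral.integral_const_mul, hint1]
    have h3 : (∫ t in (0:ℝ)..Real.pi, (deriv g (t + α) + deriv g t) / 2) = 0 := by
      have ha : IntervalIntegrable (fun t => deriv g (t + α)) volume 0 Real.pi :=
        (hg'c.comp (continuous_id.add continuous_const)).intervalIntegrable _ _
      have hb : IntervalIntegrable (deriv g) volume 0 Real.pi :=
        hg'c.intervalIntegrable _ _
      rw [intervalIntegral.integral_div, intervalIntegral.integral_add ha hb, hint2, hint3]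
      norm_num
    rw [h3]
    ring
  -- differentiate under the integral sign
  have main : HasDerivAt (fun x => ∫ t in (0:ℝ)..Real.pi, F x t)
      (∫ t in (0:ℝ)..Real.pi, F' 0 t) 0 := by
    have h0b : (0:ℝ) ∈ ball (0:ℝ) δ := mem_ball_self hδ
    refine (intervalIntegral.hasDerivAt_integral_of_dominated_loc_of_deriv_le (bound := fun _ => C) (ball_mem_nhds (0:ℝ) hδ)
      ?_ ?_ ?_ ?_ ?_ ?_).2
    · filter_upwards [ball_mem_nhds (0:ℝ) hδ] with x hx
      exact ((hFcont x hx).aestronglyMeasurable).restrict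
    · exact (hFcont 0 h0b).intervalIntegrable _ _
    · rw [hF'0]
      exact ((continuous_const.mul ((hgc.comp (continuous_id.add continuous_const)).sub
        hgc)).sub (continuous_const.mul (((hg'c.comp (continuous_id.add
        continuous_const)).add hg'c).div_const 2))).aestronglyMeasurable.restrict
    · exact ae_of_all _ fun t _ x hx => hbound t x hx
    · exact intervalIntegrable_const
    · exact ae_of_all _ fun t _ x hx => hdiff t x hx
  rw [hintF'0] at main
  have heq : φ =ᶠ[nhds (0:ℝ)] fun x => (1 / Real.pi) * ∫ t in (0:ℝ)..Real.pi, F x t := by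
    filter_upwards [ball_mem_nhds (0:ℝ) hδ] with x hx
    exact hφ x (keypos x hx)
  have : HasDerivAt (fun x => (1 / Real.pi) * ∫ t in (0:ℝ)..Real.pi, F x t)
      ((1 / Real.pi) * 0) 0 := main.const_mul _
  rw [mul_zero] at this
  exact this.congr_of_eventuallyEq heq
end

section
/- Let α ∈ ℝ, let N be a finite set of positive even integers, and let g(t) = a₀ + Σ_{n∈N} (a_n cos(nt) + b_n sin(nt)) be a real trigonometric polynomial (a₀, a_n, b_n ∈ ℝ), and write g₊(t) = g(t+α). Then sin α · ∫₀^π ( g′(t)g₊′(t) + 3g′(t)² + 4g(t)g₊(t) − 4g(t)² ) dt − 4 cos α · ∫₀^π g₊(t)g′(t) dt = (π/2) · Σ_{n∈N} (a_n² + b_n²) · [ (3n²−4)·sin α + (n²+4)·sin α·cos(nα) − 4n·cos α·sin(nα) ]. -/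
open Real intervalIntegral

noncomputable def TP (N : Finset ℕ) (c : ℝ) (P Q : ℕ → ℝ) : ℝ → ℝ :=
  fun t => c + ∑ n ∈ N, (P n * Real.cos (n * t) + Q n * Real.sin (n * t))

lemma TP_continuous (N : Finset ℕ) (c : ℝ) (P Q : ℕ → ℝ) : Continuous (TP N c P Q) := by
  unfold TP
  refine continuous_const.add (continuous_finset_sum _ fun n _ => ?_)
  fun_prop

lemma Icos_int (k : ℤ) (hk : k ≠ 0) :
    ∫ t in (0:ℝ)..Real.pi, Real.cos ((k:ℝ) * t) = 0 := by
  have hk' : (k:ℝ) ≠ 0 := Int.cast_ne_zero.2 hk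
  rw [intervalIntegral.integral_comp_mul_left Real.cos hk', integral_cos]
  simp [Real.sin_int_mul_pi]

lemma Isin_int (k : ℤ) (hk : Even k) :
    ∫ t in (0:ℝ)..Real.pi, Real.sin ((k:ℝ) * t) = 0 := by
  rcases eq_or_ne k 0 with h | h
  · simp [h]
  have hk' : (k:ℝ) ≠ 0 := Int.cast_ne_zero.2 h
  rw [intervalIntegral.integral_comp_mul_left Real.sin hk', integral_sin]
  obtain ⟨j, hj⟩ := hk
  have : (k:ℝ) * Real.pi = (j:ℝ) * (2 * Real.pi) := by
    rw [hj]; push_cast; ring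
  rw [this, Real.cos_int_mul_two_pi]
  simp

lemma int_cos_k (k : ℤ) : IntervalIntegrable (fun t => Real.cos ((k:ℝ) * t)) MeasureTheory.volume 0 Real.pi := by
  apply Continuous.intervalIntegrable; fun_prop

lemma int_sin_k (k : ℤ) : IntervalIntegrable (fun t => Real.sin ((k:ℝ) * t)) MeasureTheory.volume 0 Real.pi := by
  apply Continuous.intervalIntegrable; fun_prop

lemma orth_cc (m n : ℕ) (hm : 0 < m) (hn : 0 < n) :
    ∫ t in (0:ℝ)..Real.pi, Real.cos (m * t) * Real.cos (n * t)
      = if m = n then Real.pi / 2 else 0 := by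
  have key : ∀ t : ℝ, Real.cos (m * t) * Real.cos (n * t)
      = (Real.cos ((((m:ℤ) - n : ℤ):ℝ) * t) + Real.cos ((((m:ℤ) + n : ℤ):ℝ) * t)) / 2 := by
    intro t
    push_cast
    rw [sub_mul, add_mul, Real.cos_sub, Real.cos_add]
    ring
  simp_rw [key]
  rw [intervalIntegral.integral_div, intervalIntegral.integral_add (int_cos_k _) (int_cos_k _)]
  rcases eq_or_ne m n with h | h
  · subst h
    have h0 : ((m:ℤ) - m : ℤ) = 0 := by ring
    rw [h0, Icos_int ((m:ℤ) + m) (by omega)]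
    norm_num
  · have hmn : ((m:ℤ) - n : ℤ) ≠ 0 := by
      intro hc; apply h; omega
    rw [Icos_int _ hmn, Icos_int ((m:ℤ) + n) (by omega)]
    simp [h]

lemma orth_ss (m n : ℕ) (hm : 0 < m) (hn : 0 < n) :
    ∫ t in (0:ℝ)..Real.pi, Real.sin (m * t) * Real.sin (n * t)
      = if m = n then Real.pi / 2 else 0 := by
  have key : ∀ t : ℝ, Real.sin (m * t) * Real.sin (n * t)
      = (Real.cos ((((m:ℤ) - n : ℤ):ℝ) * t) - Real.cos ((((m:ℤ) + n : ℤ):ℝ) * t)) / 2 := by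
    intro t
    push_cast
    rw [sub_mul, add_mul, Real.cos_sub, Real.cos_add]
    ring
  simp_rw [key]
  rw [intervalIntegral.integral_div, intervalIntegral.integral_sub (int_cos_k _) (int_cos_k _)]
  rcases eq_or_ne m n with h | h
  · subst h
    have h0 : ((m:ℤ) - m : ℤ) = 0 := by ring
    rw [h0, Icos_int ((m:ℤ) + m) (by omega)]
    norm_num
  · have hmn : ((m:ℤ) - n : ℤ) ≠ 0 := by
      intro hc; apply h; omega
    rw [Icos_int _ hmn, Icos_int ((m:ℤ) + n) (by omega)]
    simp [h]

lemma orth_sc (m n : ℕ) (hm : Even m) (hn : Even n) :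
    ∫ t in (0:ℝ)..Real.pi, Real.sin (m * t) * Real.cos (n * t) = 0 := by
  have key : ∀ t : ℝ, Real.sin (m * t) * Real.cos (n * t)
      = (Real.sin ((((m:ℤ) + n : ℤ):ℝ) * t) + Real.sin ((((m:ℤ) - n : ℤ):ℝ) * t)) / 2 := by
    intro t
    push_cast
    rw [sub_mul, add_mul, Real.sin_sub, Real.sin_add]
    ring
  simp_rw [key]
  rw [intervalIntegral.integral_div, intervalIntegral.integral_add (int_sin_k _) (int_sin_k _)]
  obtain ⟨i, hi⟩ := hm
  obtain ⟨j, hj⟩ := hn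
  rw [Isin_int _ ⟨(i:ℤ) + j, by omega⟩, Isin_int _ ⟨(i:ℤ) - j, by omega⟩]
  norm_num

lemma Izero_cos (n : ℕ) (hn : 0 < n) :
    ∫ t in (0:ℝ)..Real.pi, Real.cos (n * t) = 0 := by
  have : ∀ t : ℝ, Real.cos ((n:ℝ) * t) = Real.cos (((n:ℤ):ℝ) * t) := by intro t; norm_num
  simp_rw [this]
  exact Icos_int n (by omega)

lemma Izero_sin (n : ℕ) (hn : Even n) :
    ∫ t in (0:ℝ)..Real.pi, Real.sin (n * t) = 0 := by
  have : ∀ t : ℝ, Real.sin ((n:ℝ) * t) = Real.sin (((n:ℤ):ℝ) * t) := by intro t; norm_num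
  simp_rw [this]
  obtain ⟨i, hi⟩ := hn
  exact Isin_int n ⟨(i:ℤ), by omega⟩

lemma pair_integral (m n : ℕ) (hmE : Even m) (hm : 0 < m) (hnE : Even n) (hn : 0 < n)
    (P Q R T : ℝ) :
    ∫ t in (0:ℝ)..Real.pi,
        (P * Real.cos (m*t) + Q * Real.sin (m*t)) * (R * Real.cos (n*t) + T * Real.sin (n*t))
      = if m = n then Real.pi / 2 * (P * R + Q * T) else 0 := by
  have key : ∀ t : ℝ,
      (P * Real.cos (m*t) + Q * Real.sin (m*t)) * (R * Real.cos (n*t) + T * Real.sin (n*t))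
      = P * R * (Real.cos (m*t) * Real.cos (n*t)) + Q * T * (Real.sin (m*t) * Real.sin (n*t))
        + P * T * (Real.cos (m*t) * Real.sin (n*t))
        + Q * R * (Real.sin (m*t) * Real.cos (n*t)) := by
    intro t; ring
  simp_rw [key]
  have icc : IntervalIntegrable (fun t => P * R * (Real.cos (m*t) * Real.cos (n*t))) MeasureTheory.volume 0 Real.pi := by
    apply Continuous.intervalIntegrable; fun_prop
  have iss : IntervalIntegrable (fun t => Q * T * (Real.sin (m*t) * Real.sin (n*t))) MeasureTheory.volume 0 Real.pi := by
    apply Continuous.intervalIntegrable; fun_prop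
  have ics : IntervalIntegrable (fun t => P * T * (Real.cos (m*t) * Real.sin (n*t))) MeasureTheory.volume 0 Real.pi := by
    apply Continuous.intervalIntegrable; fun_prop
  rw [intervalIntegral.integral_add (((icc.add iss)).add ics) (by apply Continuous.intervalIntegrable; fun_prop),
    intervalIntegral.integral_add (icc.add iss) ics,
    intervalIntegral.integral_add icc iss,
    intervalIntegral.integral_const_mul, intervalIntegral.integral_const_mul,
    intervalIntegral.integral_const_mul, intervalIntegral.integral_const_mul,
    orth_cc m n hm hn, orth_ss m n hm hn]
  have h1 : (∫ t in (0:ℝ)..Real.pi, Real.cos (m*t) * Real.sin (n*t)) = 0 := by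
    simp_rw [mul_comm (Real.cos ((m:ℝ)*_))]
    exact orth_sc n m hnE hmE
  rw [h1, orth_sc m n hmE hnE]
  rcases eq_or_ne m n with h | h <;> simp [h] <;> ring

lemma bilin (N : Finset ℕ) (hN : ∀ n ∈ N, Even n ∧ 0 < n)
    (c d : ℝ) (P Q R T : ℕ → ℝ) :
    ∫ t in (0:ℝ)..Real.pi, TP N c P Q t * TP N d R T t
      = Real.pi * (c * d) + Real.pi / 2 * ∑ n ∈ N, (P n * R n + Q n * T n) := by
  have h2 : ∀ t : ℝ, (∑ n ∈ N, ((c * R n + d * P n) * Real.cos (n*t) + (c * T n + d * Q n) * Real.sin (n*t)))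
      = c * (∑ n ∈ N, (R n * Real.cos (n*t) + T n * Real.sin (n*t)))
        + (∑ n ∈ N, (P n * Real.cos (n*t) + Q n * Real.sin (n*t))) * d := by
    intro t
    rw [Finset.mul_sum, Finset.sum_mul, ← Finset.sum_add_distrib]
    exact Finset.sum_congr rfl fun n _ => by ring
  have key : ∀ t : ℝ, TP N c P Q t * TP N d R T t
      = c * d
        + (∑ n ∈ N, ((c * R n + d * P n) * Real.cos (n*t) + (c * T n + d * Q n) * Real.sin (n*t)))
        + ∑ m ∈ N, ∑ n ∈ N,
            (P m * Real.cos (m*t) + Q m * Real.sin (m*t)) * (R n * Real.cos (n*t) + T n * Real.sin (n*t)) := by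
    intro t
    rw [← Finset.sum_mul_sum, h2 t]
    unfold TP
    ring
  simp_rw [key]
  have iconst : IntervalIntegrable (fun _ : ℝ => c * d) MeasureTheory.volume 0 Real.pi :=
    intervalIntegrable_const
  have isum1 : IntervalIntegrable (fun t => ∑ n ∈ N, ((c * R n + d * P n) * Real.cos (n*t)
      + (c * T n + d * Q n) * Real.sin (n*t))) MeasureTheory.volume 0 Real.pi := by
    apply Continuous.intervalIntegrable
    exact continuous_finset_sum _ fun n _ => by fun_prop
  have isum2 : IntervalIntegrable (fun t => ∑ m ∈ N, ∑ n ∈ N,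
      (P m * Real.cos (m*t) + Q m * Real.sin (m*t)) * (R n * Real.cos (n*t) + T n * Real.sin (n*t))) MeasureTheory.volume 0 Real.pi := by
    apply Continuous.intervalIntegrable
    exact continuous_finset_sum _ fun m _ => continuous_finset_sum _ fun n _ => by fun_prop
  rw [intervalIntegral.integral_add (iconst.add isum1) isum2,
    intervalIntegral.integral_add iconst isum1]
  have e1 : (∫ _ in (0:ℝ)..Real.pi, c * d) = Real.pi * (c * d) := by
    simp
    ring
  have e2 : (∫ t in (0:ℝ)..Real.pi, ∑ n ∈ N, ((c * R n + d * P n) * Real.cos (n*t)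
      + (c * T n + d * Q n) * Real.sin (n*t))) = 0 := by
    rw [intervalIntegral.integral_finset_sum (fun n _ => by apply Continuous.intervalIntegrable; fun_prop)]
    apply Finset.sum_eq_zero
    intro n hn
    obtain ⟨hnE, hnpos⟩ := hN n hn
    rw [intervalIntegral.integral_add (by apply Continuous.intervalIntegrable; fun_prop)
      (by apply Continuous.intervalIntegrable; fun_prop),
      intervalIntegral.integral_const_mul, intervalIntegral.integral_const_mul,
      Izero_cos n hnpos, Izero_sin n hnE]
    ring
  have e3 : (∫ t in (0:ℝ)..Real.pi, ∑ m ∈ N, ∑ n ∈ N,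
      (P m * Real.cos (m*t) + Q m * Real.sin (m*t)) * (R n * Real.cos (n*t) + T n * Real.sin (n*t)))
      = Real.pi / 2 * ∑ n ∈ N, (P n * R n + Q n * T n) := by
    rw [intervalIntegral.integral_finset_sum (fun m _ =>
      Continuous.intervalIntegrable (continuous_finset_sum _ fun n _ => by fun_prop) _ _)]
    have : ∀ m ∈ N, (∫ t in (0:ℝ)..Real.pi, ∑ n ∈ N,
        (P m * Real.cos (m*t) + Q m * Real.sin (m*t)) * (R n * Real.cos (n*t) + T n * Real.sin (n*t)))
        = Real.pi / 2 * (P m * R m + Q m * T m) := by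
      intro m hm
      rw [intervalIntegral.integral_finset_sum (fun n _ => by apply Continuous.intervalIntegrable; fun_prop)]
      have : ∀ n ∈ N, (∫ t in (0:ℝ)..Real.pi,
          (P m * Real.cos (m*t) + Q m * Real.sin (m*t)) * (R n * Real.cos (n*t) + T n * Real.sin (n*t)))
          = if m = n then Real.pi / 2 * (P m * R m + Q m * T m) else 0 := by
        intro n hn
        rw [pair_integral m n (hN m hm).1 (hN m hm).2 (hN n hn).1 (hN n hn).2]
        rcases eq_or_ne m n with h | h <;> simp [h]
      rw [Finset.sum_congr rfl this, Finset.sum_ite_eq N m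
        (fun _ => Real.pi / 2 * (P m * R m + Q m * T m)), if_pos hm]
    rw [Finset.sum_congr rfl this, Finset.mul_sum]
  rw [e1, e2, e3]
  ring

/-- **Lemma (diagonalization of the Hessian in Fourier coefficients).** Let
`g(t) = a₀ + ∑_{n ∈ N} (aₙ cos nt + bₙ sin nt)` be a real trigonometric polynomial over
a finite set `N` of positive even integers, and `g₊(t) = g (t+α)`. Then
`sin α ∫₀^π (g′ g′₊ + 3 g′² + 4 g g₊ − 4 g²) − 4 cos α ∫₀^π g₊ g′
  = (π/2) ∑ n ∈ N (aₙ² + bₙ²) ((3n²−4) sin α + (n²+4) sin α cos nα − 4n cos α sin nα)`. -/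
theorem hessian_fourier_diagonalization (α : ℝ) (N : Finset ℕ)
    (hN : ∀ n ∈ N, Even n ∧ 0 < n)
    (a₀ : ℝ) (a b : ℕ → ℝ) (g : ℝ → ℝ)
    (hg : ∀ t, g t = a₀ + ∑ n ∈ N, (a n * Real.cos (n * t) + b n * Real.sin (n * t))) :
    Real.sin α * (∫ t in (0:ℝ)..Real.pi,
        (deriv g t * deriv g (t + α) + 3 * (deriv g t) ^ 2 +
          4 * g t * g (t + α) - 4 * (g t) ^ 2))
      - 4 * Real.cos α * ∫ t in (0:ℝ)..Real.pi, g (t + α) * deriv g t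
    = (Real.pi / 2) * ∑ n ∈ N, (a n ^ 2 + b n ^ 2) *
        ((3 * (n:ℝ) ^ 2 - 4) * Real.sin α + ((n:ℝ) ^ 2 + 4) * Real.sin α * Real.cos (n * α)
          - 4 * n * Real.cos α * Real.sin (n * α)) := by
  have hG : ∀ t, g t = TP N a₀ a b t := fun t => hg t
  have hsum : ∀ t : ℝ, HasDerivAt (fun t => ∑ n ∈ N, (a n * Real.cos (n*t) + b n * Real.sin (n*t)))
      (∑ n ∈ N, ((n:ℝ) * b n * Real.cos (n*t) + -((n:ℝ) * a n) * Real.sin (n*t))) t := by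
    intro t
    apply HasDerivAt.fun_sum
    intro n _
    have hid : HasDerivAt (fun t : ℝ => (n:ℝ) * t) (n:ℝ) t := by
      simpa using (hasDerivAt_id t).const_mul (n:ℝ)
    have hcos : HasDerivAt (fun t : ℝ => Real.cos ((n:ℝ)*t)) (-Real.sin ((n:ℝ)*t) * n) t :=
      (Real.hasDerivAt_cos ((n:ℝ)*t)).comp t hid
    have hsin : HasDerivAt (fun t : ℝ => Real.sin ((n:ℝ)*t)) (Real.cos ((n:ℝ)*t) * n) t :=
      (Real.hasDerivAt_sin ((n:ℝ)*t)).comp t hid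
    have h := (hcos.const_mul (a n)).fun_add (hsin.const_mul (b n))
    convert h using 1
    ring
  have hasD : ∀ t, HasDerivAt g
      (TP N 0 (fun n => (n:ℝ) * b n) (fun n => -((n:ℝ) * a n)) t) t := by
    intro t
    rw [funext hG]
    unfold TP
    rw [zero_add]
    exact (hsum t).const_add a₀
  have hD : ∀ t, deriv g t
      = TP N 0 (fun n => (n:ℝ) * b n) (fun n => -((n:ℝ) * a n)) t :=
    fun t => (hasD t).deriv
  have hGα : ∀ t, g (t + α)
      = TP N a₀ (fun n => a n * Real.cos (n*α) + b n * Real.sin (n*α))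
          (fun n => b n * Real.cos (n*α) - a n * Real.sin (n*α)) t := by
    intro t
    rw [hG (t + α)]
    unfold TP
    congr 1
    apply Finset.sum_congr rfl
    intro n _
    rw [mul_add, Real.cos_add, Real.sin_add]
    ring
  have hDα : ∀ t, deriv g (t + α)
      = TP N 0 (fun n => (n:ℝ) * b n * Real.cos (n*α) + -((n:ℝ) * a n) * Real.sin (n*α))
          (fun n => -((n:ℝ) * a n) * Real.cos (n*α) - (n:ℝ) * b n * Real.sin (n*α)) t := by
    intro t
    rw [hD (t + α)]
    unfold TP
    congr 1
    apply Finset.sum_congr rfl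
    intro n _
    rw [mul_add, Real.cos_add, Real.sin_add]
    ring
  simp only [hDα]
  simp only [hD]
  simp only [hGα]
  simp only [hG]
  have hmul : ∀ (x y : ℝ), 4 * x * y = 4 * (x * y) := fun x y => mul_assoc 4 x y
  simp only [pow_two, hmul]
  have c1 := TP_continuous N 0 (fun n => (n:ℝ) * b n) (fun n => -((n:ℝ) * a n))
  have c2 := TP_continuous N 0 (fun n => (n:ℝ) * b n * Real.cos (n*α) + -((n:ℝ) * a n) * Real.sin (n*α))
      (fun n => -((n:ℝ) * a n) * Real.cos (n*α) - (n:ℝ) * b n * Real.sin (n*α))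
  have c3 := TP_continuous N a₀ a b
  have c4 := TP_continuous N a₀ (fun n => a n * Real.cos (n*α) + b n * Real.sin (n*α))
      (fun n => b n * Real.cos (n*α) - a n * Real.sin (n*α))
  have i1 := (c1.fun_mul c2).intervalIntegrable (μ := MeasureTheory.volume) (0:ℝ) Real.pi
  have i2 := (continuous_const.fun_mul (c1.fun_mul c1) : Continuous fun t => (3:ℝ) * _).intervalIntegrable (μ := MeasureTheory.volume) (0:ℝ) Real.pi
  have i3 := (continuous_const.fun_mul (c3.fun_mul c4) : Continuous fun t => (4:ℝ) * _).intervalIntegrable (μ := MeasureTheory.volume) (0:ℝ) Real.pi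
  have i4 := (continuous_const.fun_mul (c3.fun_mul c3) : Continuous fun t => (4:ℝ) * _).intervalIntegrable (μ := MeasureTheory.volume) (0:ℝ) Real.pi
  rw [intervalIntegral.integral_sub ((i1.add i2).add i3) i4,
    intervalIntegral.integral_add (i1.add i2) i3,
    intervalIntegral.integral_add i1 i2,
    intervalIntegral.integral_const_mul, intervalIntegral.integral_const_mul,
    intervalIntegral.integral_const_mul]
  simp only [bilin N hN]
  have s1 : ∑ n ∈ N,
        (↑n * b n * (↑n * b n * Real.cos (↑n * α) + -(↑n * a n) * Real.sin (↑n * α)) +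
          -(↑n * a n) * (-(↑n * a n) * Real.cos (↑n * α) - ↑n * b n * Real.sin (↑n * α)))
      = ∑ n ∈ N, (n:ℝ)^2 * (a n^2 + b n^2) * Real.cos (↑n * α) :=
    Finset.sum_congr rfl fun n _ => by ring
  have s2 : ∑ n ∈ N, (↑n * b n * (↑n * b n) + -(↑n * a n) * -(↑n * a n))
      = ∑ n ∈ N, (n:ℝ)^2 * (a n^2 + b n^2) :=
    Finset.sum_congr rfl fun n _ => by ring
  have s3 : ∑ n ∈ N,
        (a n * (a n * Real.cos (↑n * α) + b n * Real.sin (↑n * α)) +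
          b n * (b n * Real.cos (↑n * α) - a n * Real.sin (↑n * α)))
      = ∑ n ∈ N, (a n^2 + b n^2) * Real.cos (↑n * α) :=
    Finset.sum_congr rfl fun n _ => by ring
  have s4 : ∑ n ∈ N, (a n * a n + b n * b n) = ∑ n ∈ N, (a n^2 + b n^2) :=
    Finset.sum_congr rfl fun n _ => by ring
  have s5 : ∑ n ∈ N,
        ((a n * Real.cos (↑n * α) + b n * Real.sin (↑n * α)) * (↑n * b n) +
          (b n * Real.cos (↑n * α) - a n * Real.sin (↑n * α)) * -(↑n * a n))
      = ∑ n ∈ N, (n:ℝ) * (a n^2 + b n^2) * Real.sin (↑n * α) :=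
    Finset.sum_congr rfl fun n _ => by ring
  have sR : ∑ x ∈ N,
        (a x * a x + b x * b x) *
          ((3 * ((x:ℝ) * x) - 4) * Real.sin α + ((x:ℝ) * x + 4) * Real.sin α * Real.cos (↑x * α) -
            4 * ((x:ℝ) * Real.cos α * Real.sin (↑x * α)))
      = Real.sin α * (∑ n ∈ N, (n:ℝ)^2 * (a n^2 + b n^2) * Real.cos (↑n * α))
        + 3 * Real.sin α * (∑ n ∈ N, (n:ℝ)^2 * (a n^2 + b n^2))
        + 4 * Real.sin α * (∑ n ∈ N, (a n^2 + b n^2) * Real.cos (↑n * α))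
        - 4 * Real.sin α * (∑ n ∈ N, (a n^2 + b n^2))
        - 4 * Real.cos α * (∑ n ∈ N, (n:ℝ) * (a n^2 + b n^2) * Real.sin (↑n * α)) := by
    simp only [Finset.mul_sum, ← Finset.sum_add_distrib, ← Finset.sum_sub_distrib]
    exact Finset.sum_congr rfl fun n _ => by ring
  rw [s1, s2, s3, s4, s5, sR]
  ring
end

section
/- For an integer n and α ∈ ℝ, set f_n(α) = (3n²−4)·sin α + (n²+4)·sin α·cos(nα) − 4n·cos α·sin(nα). Then for every even integer n ≥ 4 and every α ∈ (0, π), one has f_n(α) > 0. -/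
set_option maxHeartbeats 4000000

open Real Set

private lemma calc1 {x : ℝ} (h0 : 0 < x) (hπ : x < Real.pi) : x * Real.cos x < Real.sin x := by
  have key : StrictMonoOn (fun x : ℝ => Real.sin x - x * Real.cos x) (Set.Icc 0 Real.pi) := by
    apply strictMonoOn_of_deriv_pos (convex_Icc 0 Real.pi)
    · exact (Real.continuous_sin.sub (continuous_id.mul Real.continuous_cos)).continuousOn
    · intro x hx
      rw [interior_Icc] at hx
      have h : HasDerivAt (fun x : ℝ => Real.sin x - x * Real.cos x)
          (Real.cos x - (1 * Real.cos x + x * (-Real.sin x))) x :=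
        (Real.hasDerivAt_sin x).sub ((hasDerivAt_id x).mul (Real.hasDerivAt_cos x))
      rw [h.deriv]
      have hs := Real.sin_pos_of_pos_of_lt_pi hx.1 hx.2
      nlinarith [hx.1]
  have := key (by constructor <;> simp [Real.pi_pos.le]) ⟨h0.le, hπ.le⟩ h0
  simpa using this

private lemma calc2 {z : ℝ} (h0 : 0 < z) (hπ : z < Real.pi) :
    0 < 11 - 11 * Real.cos z - 5 * (z * Real.sin z) := by
  have key : StrictMonoOn (fun z : ℝ => 11 - 11 * Real.cos z - 5 * (z * Real.sin z))
      (Set.Icc 0 Real.pi) := by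
    apply strictMonoOn_of_deriv_pos (convex_Icc 0 Real.pi)
    · exact ((continuous_const.sub (continuous_const.mul Real.continuous_cos)).sub
        (continuous_const.mul (continuous_id.mul Real.continuous_sin))).continuousOn
    · intro x hx
      rw [interior_Icc] at hx
      have h : HasDerivAt (fun z : ℝ => 11 - 11 * Real.cos z - 5 * (z * Real.sin z))
          ((0 : ℝ) - 11 * (-Real.sin x) - 5 * (1 * Real.sin x + x * Real.cos x)) x := by
        have h1 : HasDerivAt (fun z : ℝ => (11 : ℝ)) (0 : ℝ) x := hasDerivAt_const x 11
        have h2 : HasDerivAt (fun z : ℝ => 11 * Real.cos z) (11 * (-Real.sin x)) x :=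
          (Real.hasDerivAt_cos x).const_mul 11
        have h3 : HasDerivAt (fun z : ℝ => z * Real.sin z) (1 * Real.sin x + x * Real.cos x) x :=
          (hasDerivAt_id x).mul (Real.hasDerivAt_sin x)
        exact (h1.sub h2).sub (h3.const_mul 5)
      rw [h.deriv]
      have hs := Real.sin_pos_of_pos_of_lt_pi hx.1 hx.2
      have hc := calc1 hx.1 hx.2
      nlinarith
  have := key (by constructor <;> simp [Real.pi_pos.le]) ⟨h0.le, hπ.le⟩ h0
  simpa using this

private lemma calc3 {z : ℝ} (h0 : 0 < z) (hπ : z < Real.pi) :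
    16 * Real.sin z ≤ z * (11 + 5 * Real.cos z) := by
  have key : StrictMonoOn (fun z : ℝ => z * (11 + 5 * Real.cos z) - 16 * Real.sin z)
      (Set.Icc 0 Real.pi) := by
    apply strictMonoOn_of_deriv_pos (convex_Icc 0 Real.pi)
    · exact ((continuous_id.mul (continuous_const.add
        (continuous_const.mul Real.continuous_cos))).sub
        (continuous_const.mul Real.continuous_sin)).continuousOn
    · intro x hx
      rw [interior_Icc] at hx
      have h : HasDerivAt (fun z : ℝ => z * (11 + 5 * Real.cos z) - 16 * Real.sin z)
          ((1 * (11 + 5 * Real.cos x) + x * (0 + 5 * (-Real.sin x))) - 16 * Real.cos x) x := by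
        have h1 : HasDerivAt (fun z : ℝ => z * (11 + 5 * Real.cos z))
            (1 * (11 + 5 * Real.cos x) + x * (0 + 5 * (-Real.sin x))) x :=
          (hasDerivAt_id x).mul ((hasDerivAt_const x (11:ℝ)).add ((Real.hasDerivAt_cos x).const_mul 5))
        exact h1.sub ((Real.hasDerivAt_sin x).const_mul 16)
      rw [h.deriv]
      have := calc2 hx.1 hx.2
      nlinarith
  have := key (by constructor <;> simp [Real.pi_pos.le]) ⟨h0.le, hπ.le⟩ h0
  simp only [Real.sin_zero, Real.cos_zero] at this
  nlinarith

private lemma region1 {N α : ℝ} (hN : 4 ≤ N) (h0 : 0 < α) (h1 : N * α < Real.pi) :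
    0 < (3 * N ^ 2 - 4) * Real.sin α + (N ^ 2 + 4) * Real.sin α * Real.cos (N * α)
        - 4 * N * Real.cos α * Real.sin (N * α) := by
  have hπα : α < Real.pi := by nlinarith
  have hσ : 0 < Real.sin α := Real.sin_pos_of_pos_of_lt_pi h0 hπα
  set y : ℝ := N * α / 2 with hy
  have hy0 : 0 < y := by positivity
  have hy2 : y < Real.pi / 2 := by rw [hy]; linarith
  have hs : 0 < Real.sin y := Real.sin_pos_of_pos_of_lt_pi hy0 (by linarith [Real.pi_pos])
  have hc : 0 < Real.cos y :=
    Real.cos_pos_of_mem_Ioo ⟨by linarith [Real.pi_pos], hy2⟩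
  have h2y : N * α = 2 * y := by rw [hy]; ring
  have hpyth : Real.sin y ^ 2 + Real.cos y ^ 2 = 1 := Real.sin_sq_add_cos_sq y
  have hC : Real.cos (N * α) = 1 - 2 * Real.sin y ^ 2 := by
    rw [h2y, Real.cos_two_mul]; linarith
  have hS : Real.sin (N * α) = 2 * (Real.sin y * Real.cos y) := by
    rw [h2y, Real.sin_two_mul]; ring
  have fact1 : α * Real.cos α < Real.sin α := calc1 h0 hπα
  -- key inequality: 8 s c ≤ y (3 s² + 8 c²)
  have hkey : 8 * (Real.sin y * Real.cos y) ≤ y * (3 * Real.sin y ^ 2 + 8 * Real.cos y ^ 2) := by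
    have := calc3 (z := 2 * y) (by linarith) (by linarith)
    rw [Real.sin_two_mul, Real.cos_two_mul'] at this
    nlinarith
  -- F rewritten
  rw [hC, hS]
  have hF : (3 * N ^ 2 - 4) * Real.sin α + (N ^ 2 + 4) * Real.sin α * (1 - 2 * Real.sin y ^ 2)
      - 4 * N * Real.cos α * (2 * (Real.sin y * Real.cos y))
      = 2 * (N ^ 2 - 4) * Real.sin α * Real.sin y ^ 2 + 4 * N ^ 2 * Real.sin α * Real.cos y ^ 2
        - 8 * N * Real.cos α * (Real.sin y * Real.cos y) := by
    linear_combination (-(4 * N ^ 2 * Real.sin α)) * hpyth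
  rw [hF]
  -- multiply through by N * α = 2 y > 0
  have hNα : 0 < N * α := by positivity
  rw [← mul_pos_iff_of_pos_right hNα]
  have step1 : 8 * N * Real.cos α * (Real.sin y * Real.cos y) * (N * α)
      < 8 * N ^ 2 * Real.sin α * (Real.sin y * Real.cos y) := by
    have hsc : 0 < 8 * N ^ 2 * (Real.sin y * Real.cos y) := by positivity
    nlinarith [mul_lt_mul_of_pos_left fact1 hsc]
  have step2 : 8 * N ^ 2 * Real.sin α * (Real.sin y * Real.cos y)
      ≤ (2 * (N ^ 2 - 4) * Real.sin α * Real.sin y ^ 2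
        + 4 * N ^ 2 * Real.sin α * Real.cos y ^ 2) * (N * α) := by
    rw [h2y]
    have hmul := mul_le_mul_of_nonneg_left hkey (by positivity : (0:ℝ) ≤ N ^ 2 * Real.sin α)
    nlinarith [hmul, mul_nonneg (mul_nonneg (by nlinarith : (0:ℝ) ≤ N ^ 2 - 16)
      (mul_nonneg hσ.le (sq_nonneg (Real.sin y)))) hy0.le]
  nlinarith [step1, step2]

private lemma regionM {N α : ℝ} (hN : 4 ≤ N) (h0 : 0 < α) (h2 : α ≤ Real.pi / 2)
    (hlow : Real.pi / N ≤ α) :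
    0 < (3 * N ^ 2 - 4) * Real.sin α + (N ^ 2 + 4) * Real.sin α * Real.cos (N * α)
        - 4 * N * Real.cos α * Real.sin (N * α) := by
  have hNpos : (0:ℝ) < N := by linarith
  have hπ := Real.pi_pos
  have hπlb : (3.141592:ℝ) < Real.pi := Real.pi_gt_d6
  have hπub : Real.pi < 3.15 := by
    have := Real.pi_lt_d2; linarith
  have hp0 : 0 < Real.pi / N := by positivity
  have hp1 : Real.pi / N ≤ 1 := by
    rw [div_le_one hNpos]; linarith
  -- σ ≥ sin (π/N)
  have hmono : Real.sin (Real.pi / N) ≤ Real.sin α := by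
    rcases eq_or_lt_of_le hlow with h | h
    · rw [h]
    · exact (Real.strictMonoOn_sin ⟨by linarith, by linarith⟩ ⟨by linarith, h2⟩ h).le
  have hcube : Real.pi / N - (Real.pi / N) ^ 3 / 4 < Real.sin (Real.pi / N) :=
    by have := Real.sin_gt_sub_cube hp0; nlinarith [pow_pos hp0 3]
  set P : ℝ := Real.pi / N with hP
  have hσlb : P - P ^ 3 / 4 < Real.sin α := lt_of_lt_of_le hcube hmono
  have hP3 : P ^ 3 ≤ P := by nlinarith [hp0, hp1, mul_nonneg (sub_nonneg.2 hp1) (sq_nonneg P), mul_nonneg (sub_nonneg.2 hp1) hp0.le]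
  have htpos : 0 < P - P ^ 3 / 4 := by nlinarith [hp0, hp1, hP3]
  have hσ : 0 < Real.sin α := by linarith
  have hpNπ : P * N = Real.pi := div_mul_cancel₀ _ (by positivity)
  have hP2 : P ^ 2 * N ^ 2 = Real.pi ^ 2 := by nlinarith [hpNπ, hp0, hNpos]
  have hpyth : Real.sin α ^ 2 + Real.cos α ^ 2 = 1 := Real.sin_sq_add_cos_sq α
  have hπ2 : (9.8695:ℝ) ≤ Real.pi ^ 2 := by
    have h := pow_le_pow_left₀ (by norm_num : (0:ℝ) ≤ 3.141592) hπlb.le 2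
    norm_num at h ⊢; linarith
  have hπ2b : Real.pi ^ 2 ≤ (9.9226:ℝ) := by
    have h := pow_le_pow_left₀ hπ.le hπub.le 2
    norm_num at h ⊢; linarith
  have hπ4 : Real.pi ^ 4 ≤ (98.458:ℝ) := by nlinarith [hπ2b, sq_nonneg (Real.pi^2), hπ.le, sq_nonneg Real.pi]
  have hM : (16:ℝ) ≤ N ^ 2 := by nlinarith
  have hCpos : (0:ℝ) < 4 * N ^ 4 - 16 * N ^ 2 + 64 := by nlinarith [sq_nonneg (N^2 - 2)]
  -- purely numeric core inequality
  have keyN : 16 * N ^ 6 ≤ Real.pi ^ 2 * (N ^ 2 - Real.pi ^ 2 / 2) * (4 * N ^ 4 - 16 * N ^ 2 + 64) := by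
    nlinarith [hM, hπ2, hπ2b, hπ4, hCpos, mul_nonneg (sub_nonneg.2 hM) (sq_nonneg (N^2)),
      mul_nonneg (sub_nonneg.2 hM) (sq_nonneg N), sq_nonneg (N^2 - 16), sq_nonneg N,
      mul_nonneg (mul_nonneg (sub_nonneg.2 hM) (sub_nonneg.2 hM)) (sq_nonneg N)]
  -- transfer to (P - P^3/4)^2
  have e1 : (P - P ^ 3 / 4) * N = Real.pi - P ^ 2 * Real.pi / 4 := by
    linear_combination (1 - P ^ 2 / 4) * hpNπ
  have e2 : (P - P ^ 3 / 4) ^ 2 * N ^ 2 = (Real.pi - P ^ 2 * Real.pi / 4) ^ 2 := by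
    rw [← e1]; ring
  have e3 : Real.pi ^ 2 * (1 - P ^ 2 / 2) ≤ (Real.pi - P ^ 2 * Real.pi / 4) ^ 2 := by
    nlinarith [sq_nonneg (Real.pi * P ^ 2)]
  have e4 : Real.pi ^ 2 * (1 - P ^ 2 / 2) * N ^ 2 = Real.pi ^ 2 * (N ^ 2 - Real.pi ^ 2 / 2) := by
    linear_combination (-(Real.pi ^ 2 / 2)) * hP2
  have bigchain : 16 * N ^ 6 ≤ (P - P ^ 3 / 4) ^ 2 * (4 * N ^ 4 - 16 * N ^ 2 + 64) * N ^ 4 := by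
    have c1 : Real.pi ^ 2 * (N ^ 2 - Real.pi ^ 2 / 2) * (4 * N ^ 4 - 16 * N ^ 2 + 64)
        ≤ (Real.pi - P ^ 2 * Real.pi / 4) ^ 2 * N ^ 2 * (4 * N ^ 4 - 16 * N ^ 2 + 64) := by
      have := mul_le_mul_of_nonneg_right e3 (le_of_lt (by positivity : (0:ℝ) < N ^ 2 * (4 * N ^ 4 - 16 * N ^ 2 + 64)))
      nlinarith [this, e4]
    have c2 : (Real.pi - P ^ 2 * Real.pi / 4) ^ 2 * N ^ 2 * (4 * N ^ 4 - 16 * N ^ 2 + 64)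
        = (P - P ^ 3 / 4) ^ 2 * (4 * N ^ 4 - 16 * N ^ 2 + 64) * N ^ 4 := by
      rw [← e2]; ring
    linarith [keyN, c1, c2.le]
  have key : 16 * N ^ 2 ≤ (P - P ^ 3 / 4) ^ 2 * (4 * N ^ 4 - 16 * N ^ 2 + 64) := by
    nlinarith [bigchain, pow_pos hNpos 4]
  -- squared inequality
  have hσ2 : (P - P ^ 3 / 4) ^ 2 < Real.sin α ^ 2 := by nlinarith [hσlb, htpos]
  have h5 : 16 * N ^ 2 < Real.sin α ^ 2 * (4 * N ^ 4 - 16 * N ^ 2 + 64) := by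
    have h6 := mul_lt_mul_of_pos_right hσ2 hCpos
    linarith [key, h6]
  have hsq : 16 * N ^ 2 * Real.cos α ^ 2 < (2 * N ^ 2 - 8) ^ 2 * Real.sin α ^ 2 := by
    have hκ : Real.cos α ^ 2 = 1 - Real.sin α ^ 2 := by linarith [hpyth]
    rw [hκ]; linarith [h5]
  have habs : 4 * N * |Real.cos α| < (2 * N ^ 2 - 8) * Real.sin α := by
    have h1 : (4 * N * |Real.cos α|) ^ 2 < ((2 * N ^ 2 - 8) * Real.sin α) ^ 2 := by
      rw [mul_pow, mul_pow, sq_abs]; linarith [hsq]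
    exact lt_of_pow_lt_pow_left₀ 2 (mul_nonneg (by linarith [hM]) hσ.le) h1
  have hcos1 : Real.cos α * Real.sin (N * α) ≤ |Real.cos α| :=
    calc Real.cos α * Real.sin (N * α) ≤ |Real.cos α * Real.sin (N * α)| := le_abs_self _
    _ = |Real.cos α| * |Real.sin (N * α)| := abs_mul _ _
    _ ≤ |Real.cos α| * 1 := mul_le_mul_of_nonneg_left (Real.abs_sin_le_one _) (abs_nonneg _)
    _ = |Real.cos α| := mul_one _
  have hcos2 : (N ^ 2 + 4) * Real.sin α * (-1) ≤ (N ^ 2 + 4) * Real.sin α * Real.cos (N * α) :=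
    mul_le_mul_of_nonneg_left (Real.neg_one_le_cos _) (mul_nonneg (by positivity) hσ.le)
  have hcos3 : 4 * N * (Real.cos α * Real.sin (N * α)) ≤ 4 * N * |Real.cos α| :=
    mul_le_mul_of_nonneg_left hcos1 (by linarith [hNpos])
  linarith [hcos2, hcos3, habs]

private lemma half {N α : ℝ} (hN : 4 ≤ N) (h0 : 0 < α) (h2 : α ≤ Real.pi / 2) :
    0 < (3 * N ^ 2 - 4) * Real.sin α + (N ^ 2 + 4) * Real.sin α * Real.cos (N * α)
        - 4 * N * Real.cos α * Real.sin (N * α) := by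
  rcases lt_or_ge α (Real.pi / N) with h | h
  · exact region1 hN h0 (by rw [← lt_div_iff₀' (by linarith : (0:ℝ) < N)]; exact h)
  · exact regionM hN h0 h2 h

/-- **Proposition (positivity of the Hessian eigenvalues).** For
`f_n(α) = (3n²−4) sin α + (n²+4) sin α cos nα − 4n cos α sin nα`, every even integer
`n ≥ 4` and every `α ∈ (0, π)` satisfy `f_n(α) > 0`. -/
theorem hessian_eigenvalue_pos (n : ℕ) (hn : 4 ≤ n) (heven : Even n)
    (α : ℝ) (hα : α ∈ Set.Ioo 0 Real.pi) :
    0 < (3 * (n:ℝ) ^ 2 - 4) * Real.sin α + ((n:ℝ) ^ 2 + 4) * Real.sin α * Real.cos (n * α)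
        - 4 * n * Real.cos α * Real.sin (n * α) := by
  obtain ⟨h0, hπ⟩ := hα
  have hN : (4:ℝ) ≤ (n:ℝ) := by exact_mod_cast hn
  rcases le_or_gt α (Real.pi / 2) with h | h
  · exact half hN h0 h
  · -- use symmetry α ↦ π - α
    obtain ⟨m, hm⟩ := heven
    have hnm : (n:ℝ) = 2 * m := by rw [hm]; push_cast; ring
    set β := Real.pi - α with hβ
    have hb0 : 0 < β := by rw [hβ]; linarith
    have hb2 : β ≤ Real.pi / 2 := by rw [hβ]; linarith
    have key := half hN hb0 hb2
    have hcosnπ : Real.cos ((n:ℝ) * Real.pi) = 1 := by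
      rw [hnm, show (2:ℝ) * m * Real.pi = (m:ℝ) * (2 * Real.pi) by ring]
      exact Real.cos_nat_mul_two_pi m
    have hsinnπ : Real.sin ((n:ℝ) * Real.pi) = 0 := Real.sin_nat_mul_pi n
    have e1 : Real.cos ((n:ℝ) * β) = Real.cos ((n:ℝ) * α) := by
      rw [hβ, show (n:ℝ) * (Real.pi - α) = (n:ℝ) * Real.pi - (n:ℝ) * α by ring,
        Real.cos_sub, hcosnπ, hsinnπ]; ring
    have e2 : Real.sin ((n:ℝ) * β) = -Real.sin ((n:ℝ) * α) := by
      rw [hβ, show (n:ℝ) * (Real.pi - α) = (n:ℝ) * Real.pi - (n:ℝ) * α by ring,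
        Real.sin_sub, hcosnπ, hsinnπ]; ring
    have e3 : Real.sin β = Real.sin α := by rw [hβ, Real.sin_pi_sub]
    have e4 : Real.cos β = -Real.cos α := by rw [hβ, Real.cos_pi_sub]
    rw [e1, e2, e3, e4] at key
    linarith [key]
end

section
/- For an integer n and α ∈ ℝ, set f_n(α) = (3n²−4)·sin α + (n²+4)·sin α·cos(nα) − 4n·cos α·sin(nα). If n ≥ 4 is an even integer and α ∈ (0, π) satisfies cot²α < (n²−4)/2, then f_n(α) > 0. -/
/-- **Lemma (positivity away from the endpoints).** For
`f_n(α) = (3n²−4) sin α + (n²+4) sin α cos nα − 4n cos α sin nα`, if `n ≥ 4` is an even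
integer and `α ∈ (0, π)` satisfies `cot² α < (n²−4)/2`, then `f_n(α) > 0`. -/
theorem hessian_eigenvalue_pos_of_cot_small (n : ℕ) (hn : 4 ≤ n) (heven : Even n)
    (α : ℝ) (hα : α ∈ Set.Ioo 0 Real.pi)
    (hcot : Real.cot α ^ 2 < ((n:ℝ) ^ 2 - 4) / 2) :
    0 < (3 * (n:ℝ) ^ 2 - 4) * Real.sin α + ((n:ℝ) ^ 2 + 4) * Real.sin α * Real.cos (n * α)
        - 4 * n * Real.cos α * Real.sin (n * α) := by
  obtain ⟨h0, hπ⟩ := hα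
  have hs : 0 < Real.sin α := Real.sin_pos_of_pos_of_lt_pi h0 hπ
  have hcos : Real.cos α = Real.cot α * Real.sin α := by
    rw [Real.cot_eq_cos_div_sin]; field_simp
  set c := Real.cot α with hc
  set C := Real.cos ((n : ℝ) * α) with hC
  set S := Real.sin ((n : ℝ) * α) with hS
  have hCS : S ^ 2 + C ^ 2 = 1 := Real.sin_sq_add_cos_sq _
  have hn' : (4:ℝ) ≤ n := by exact_mod_cast hn
  have key : -(3 * (n:ℝ) ^ 2 - 4) < ((n:ℝ) ^ 2 + 4) * C - 4 * n * c * S := by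
    by_contra h
    push_neg at h
    set x := ((n:ℝ) ^ 2 + 4) * C - 4 * n * c * S with hx
    have hM : 0 < 3 * (n:ℝ) ^ 2 - 4 := by nlinarith
    have hx2 : (3 * (n:ℝ) ^ 2 - 4) ^ 2 ≤ x ^ 2 := by nlinarith
    have hb : 16 * (n:ℝ) ^ 2 * c ^ 2 < 8 * (n:ℝ) ^ 2 * ((n:ℝ) ^ 2 - 4) := by nlinarith
    have hcs : x ^ 2 + (((n:ℝ)^2+4)*S + 4*n*c*C) ^ 2
        = (((n:ℝ)^2+4)^2 + 16 * (n:ℝ)^2 * c^2) * (S ^ 2 + C ^ 2) := by rw [hx]; ring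
    nlinarith [sq_nonneg (((n:ℝ)^2+4)*S + 4*n*c*C)]
  have hrw : (3 * (n:ℝ) ^ 2 - 4) * Real.sin α + ((n:ℝ) ^ 2 + 4) * Real.sin α * C
      - 4 * n * Real.cos α * S
      = Real.sin α * ((3 * (n:ℝ) ^ 2 - 4) + (((n:ℝ) ^ 2 + 4) * C - 4 * n * c * S)) := by
    rw [hcos]; ring
  rw [hrw]
  have : 0 < (3 * (n:ℝ) ^ 2 - 4) + (((n:ℝ) ^ 2 + 4) * C - 4 * n * c * S) := by linarith
  positivity
end

section
/- For an integer n and α ∈ ℝ, set f_n(α) = (3n²−4)·sin α + (n²+4)·sin α·cos(nα) − 4n·cos α·sin(nα). If n ≥ 4 is an even integer, then f_n′(α) > 0 for all α ∈ (0, π/(2n)); in particular f_n is strictly increasing on (0, π/(2n)). -/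
open Real

lemma my_tan_add_ge {a b : ℝ} (ha : 0 ≤ a) (hb : 0 ≤ b) (hab : a + b < π/2) :
    Real.tan a + Real.tan b ≤ Real.tan (a + b) := by
  have ha2 : a < π/2 := by linarith
  have hb2 : b < π/2 := by linarith
  have hca : 0 < Real.cos a := Real.cos_pos_of_mem_Ioo ⟨by linarith [Real.pi_pos], ha2⟩
  have hcb : 0 < Real.cos b := Real.cos_pos_of_mem_Ioo ⟨by linarith [Real.pi_pos], hb2⟩
  have hcab : 0 < Real.cos (a+b) := Real.cos_pos_of_mem_Ioo ⟨by linarith [Real.pi_pos], hab⟩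
  have hsa : 0 ≤ Real.sin a := Real.sin_nonneg_of_nonneg_of_le_pi ha (by linarith [Real.pi_pos])
  have hsb : 0 ≤ Real.sin b := Real.sin_nonneg_of_nonneg_of_le_pi hb (by linarith [Real.pi_pos])
  have hsab : 0 ≤ Real.sin (a+b) := Real.sin_nonneg_of_nonneg_of_le_pi (by linarith) (by linarith [Real.pi_pos])
  have hle : Real.cos (a+b) ≤ Real.cos a * Real.cos b := by
    rw [Real.cos_add]; nlinarith [mul_nonneg hsa hsb]
  have h1 : Real.tan a + Real.tan b = Real.sin (a+b) / (Real.cos a * Real.cos b) := by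
    rw [Real.tan_eq_sin_div_cos, Real.tan_eq_sin_div_cos, Real.sin_add]
    field_simp
  rw [h1, Real.tan_eq_sin_div_cos]
  gcongr

lemma my_tan_nsmul_ge (m : ℕ) {x : ℝ} (hx : 0 < x) (h : (m:ℝ) * x < π/2) :
    (m:ℝ) * Real.tan x ≤ Real.tan ((m:ℝ) * x) := by
  induction m with
  | zero => simp
  | succ k ih =>
    have hk : (k:ℝ) * x < π/2 := by push_cast at h ⊢; nlinarith
    have ihk := ih hk
    have hkx : 0 ≤ (k:ℝ) * x := by positivity
    have hadd := my_tan_add_ge hkx hx.le (by push_cast at h ⊢; linarith)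
    have htx : 0 ≤ Real.tan x := by
      have hx2 : x < π/2 := by push_cast at h; nlinarith
      rw [Real.tan_eq_sin_div_cos]
      exact div_nonneg (Real.sin_nonneg_of_nonneg_of_le_pi hx.le (by linarith [Real.pi_pos]))
        (Real.cos_pos_of_mem_Ioo ⟨by linarith [Real.pi_pos], hx2⟩).le
    push_cast
    calc ((k:ℝ)+1) * Real.tan x = (k:ℝ)*Real.tan x + Real.tan x := by ring
    _ ≤ Real.tan ((k:ℝ)*x) + Real.tan x := by linarith
    _ ≤ Real.tan ((k:ℝ)*x + x) := hadd
    _ = Real.tan (((k:ℝ)+1)*x) := by ring_nf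

/-- **Lemma (monotonicity near `0`).** For
`f_n(α) = (3n²−4) sin α + (n²+4) sin α cos nα − 4n cos α sin nα` with `n ≥ 4` an even
integer, one has `f_n′(α) > 0` for all `α ∈ (0, π/(2n))`; in particular `f_n` is
strictly increasing on `(0, π/(2n))`. -/
theorem hessian_eigenvalue_increasing (n : ℕ) (hn : 4 ≤ n) (heven : Even n)
    (f : ℝ → ℝ)
    (hf : ∀ α : ℝ, f α = (3 * (n:ℝ) ^ 2 - 4) * Real.sin α
        + ((n:ℝ) ^ 2 + 4) * Real.sin α * Real.cos (n * α)
        - 4 * n * Real.cos α * Real.sin (n * α)) :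
    (∀ α ∈ Set.Ioo (0:ℝ) (Real.pi / (2 * n)), 0 < deriv f α) ∧
    StrictMonoOn f (Set.Ioo (0:ℝ) (Real.pi / (2 * n))) := by
  obtain ⟨m, hm⟩ := heven
  have hfe : f = fun α => (3 * (n:ℝ) ^ 2 - 4) * Real.sin α
        + ((n:ℝ) ^ 2 + 4) * Real.sin α * Real.cos (n * α)
        - 4 * n * Real.cos α * Real.sin (n * α) := funext hf
  have hm2 : 2 ≤ m := by omega
  have hm2' : (2:ℝ) ≤ m := by exact_mod_cast hm2
  have hnr : (n:ℝ) = 2 * m := by rw [hm]; push_cast; ring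
  have hnpos : (0:ℝ) < n := by positivity
  -- derivative computation
  have hD : ∀ α : ℝ, HasDerivAt f
      ((3 * (n:ℝ) ^ 2 - 4) * Real.cos α * (1 - Real.cos (n * α))
        - (n:ℝ) ^ 3 * Real.sin α * Real.sin (n * α)) α := by
    intro α
    have hid : HasDerivAt (fun x : ℝ => (n:ℝ) * x) (n:ℝ) α := by
      simpa using (hasDerivAt_id α).const_mul (n:ℝ)
    have hcosn : HasDerivAt (fun x : ℝ => Real.cos ((n:ℝ) * x))
        (-Real.sin ((n:ℝ) * α) * n) α := (Real.hasDerivAt_cos _).comp α hid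
    have hsinn : HasDerivAt (fun x : ℝ => Real.sin ((n:ℝ) * x))
        (Real.cos ((n:ℝ) * α) * n) α := (Real.hasDerivAt_sin _).comp α hid
    have t1 := (Real.hasDerivAt_sin α).const_mul (3 * (n:ℝ) ^ 2 - 4)
    have t2 := ((Real.hasDerivAt_sin α).const_mul ((n:ℝ) ^ 2 + 4)).mul hcosn
    have t3 := ((Real.hasDerivAt_cos α).const_mul (4 * (n:ℝ))).mul hsinn
    have := (t1.add t2).sub t3
    rw [hfe]
    exact this.congr_deriv (by ring)
  have key : ∀ α ∈ Set.Ioo (0:ℝ) (Real.pi / (2 * n)),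
      0 < (3 * (n:ℝ) ^ 2 - 4) * Real.cos α * (1 - Real.cos (n * α))
        - (n:ℝ) ^ 3 * Real.sin α * Real.sin (n * α) := by
    intro α hα
    obtain ⟨hα0, hα1⟩ := hα
    have hαsmall : α < π / 4 := by
      have h8 : (8:ℝ) ≤ 2 * n := by rw [hnr]; linarith
      calc α < π / (2 * n) := hα1
      _ ≤ π / 8 := div_le_div_of_nonneg_left Real.pi_pos.le (by norm_num) h8
      _ < π / 4 := by linarith [Real.pi_pos]
    have hβ : (m:ℝ) * α < π / 4 := by
      have : (m:ℝ) * α < (m:ℝ) * (π / (2 * n)) :=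
        mul_lt_mul_of_pos_left hα1 (by linarith)
      calc (m:ℝ) * α < (m:ℝ) * (π / (2 * n)) := this
      _ = π / 4 := by rw [hnr]; field_simp; ring
    set β := (m:ℝ) * α with hβdef
    have hβ0 : 0 < β := by positivity
    have hcα : 0 < Real.cos α := Real.cos_pos_of_mem_Ioo
      ⟨by linarith [Real.pi_pos], by linarith [Real.pi_pos]⟩
    have hcβ : 0 < Real.cos β := Real.cos_pos_of_mem_Ioo
      ⟨by linarith [Real.pi_pos], by linarith [Real.pi_pos]⟩
    have hsβ : 0 < Real.sin β := Real.sin_pos_of_pos_of_lt_pi hβ0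
      (by linarith [Real.pi_pos])
    have hsα : 0 < Real.sin α := Real.sin_pos_of_pos_of_lt_pi hα0
      (by linarith [Real.pi_pos])
    -- tan inequality
    have htan := my_tan_nsmul_ge m hα0 (by linarith [Real.pi_pos])
    have htα : 0 < Real.tan α := by
      rw [Real.tan_eq_sin_div_cos]; positivity
    have hcoef : (n:ℝ)^3 < (3 * (n:ℝ)^2 - 4) * m := by
      rw [hnr]; nlinarith
    have hkey : (n:ℝ)^3 * Real.tan α < (3 * (n:ℝ)^2 - 4) * Real.tan β := by
      calc (n:ℝ)^3 * Real.tan α < ((3 * (n:ℝ)^2 - 4) * m) * Real.tan α := by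
            exact mul_lt_mul_of_pos_right hcoef htα
      _ = (3 * (n:ℝ)^2 - 4) * ((m:ℝ) * Real.tan α) := by ring
      _ ≤ (3 * (n:ℝ)^2 - 4) * Real.tan β := by
            apply mul_le_mul_of_nonneg_left htan
            rw [hnr]; nlinarith
    rw [Real.tan_eq_sin_div_cos, Real.tan_eq_sin_div_cos] at hkey
    have hbracket : (n:ℝ)^3 * Real.sin α * Real.cos β
        < (3 * (n:ℝ)^2 - 4) * Real.sin β * Real.cos α := by
      rw [show (n:ℝ)^3 * (Real.sin α / Real.cos α) = ((n:ℝ)^3 * Real.sin α)/Real.cos α by ring,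
        show (3*(n:ℝ)^2-4) * (Real.sin β / Real.cos β) = ((3*(n:ℝ)^2-4) * Real.sin β)/Real.cos β by ring,
        div_lt_div_iff₀ hcα hcβ] at hkey
      nlinarith
    have hnα : (n:ℝ) * α = 2 * β := by rw [hnr, hβdef]; ring
    rw [hnα, Real.cos_two_mul, Real.sin_two_mul]
    have hfinal : (3*(n:ℝ)^2-4) * Real.cos α * (1-(2*Real.cos β^2-1))
        - (n:ℝ)^3 * Real.sin α * (2*Real.sin β*Real.cos β)
        = 2*Real.sin β*((3*(n:ℝ)^2-4)*Real.sin β*Real.cos α - (n:ℝ)^3*Real.sin α*Real.cos β) := by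
      linear_combination (-(2*(3*(n:ℝ)^2-4)*Real.cos α)) * Real.sin_sq_add_cos_sq β
    rw [hfinal]
    have hbr : 0 < (3*(n:ℝ)^2-4)*Real.sin β*Real.cos α - (n:ℝ)^3*Real.sin α*Real.cos β := by
      nlinarith
    positivity
  constructor
  · intro α hα
    rw [(hD α).deriv]
    exact key α hα
  · apply strictMonoOn_of_deriv_pos (convex_Ioo _ _)
    · have hdiff : Differentiable ℝ f := fun x => (hD x).differentiableAt
      exact hdiff.continuous.continuousOn
    · intro x hx
      rw [interior_Ioo] at hx
      rw [(hD x).deriv]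
      exact key x hx
end

section
/- For every integer n ≥ 4, one has cot(π/(2n)) < √((n²−4)/2). -/
open Real

lemma cot_pi_div_eight_lt : Real.cot (π / 8) < Real.sqrt 6 := by
  have s2 := Real.sq_sqrt (by norm_num : (2:ℝ) ≥ 0)
  have s2nn : (0:ℝ) ≤ √2 := Real.sqrt_nonneg 2
  have s2lt : √2 < 1.5 := by nlinarith
  rw [Real.cot_eq_cos_div_sin, Real.cos_pi_div_eight, Real.sin_pi_div_eight]
  have hsinpos : (0:ℝ) < √(2 - √2) / 2 := by
    have : (0:ℝ) < 2 - √2 := by nlinarith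
    positivity
  rw [div_lt_iff₀ hsinpos]
  have key : √(2 + √2) < √6 * √(2 - √2) := by
    rw [← Real.sqrt_mul (by norm_num : (0:ℝ) ≤ 6)]
    apply Real.sqrt_lt_sqrt (by nlinarith)
    nlinarith
  calc √(2 + √2) / 2 < (√6 * √(2 - √2)) / 2 := by linarith
    _ = √6 * (√(2 - √2) / 2) := by ring

/-- **Lemma (the two regimes overlap).** For every integer `n ≥ 4`, one has
`cot (π/(2n)) < √((n²−4)/2)`. -/
theorem cot_lt_sqrt (n : ℕ) (hn : 4 ≤ n) :
    Real.cot (Real.pi / (2 * n)) < Real.sqrt (((n:ℝ) ^ 2 - 4) / 2) := by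
  have hpi := Real.pi_gt_d6
  rcases eq_or_lt_of_le hn with h4 | h5
  · -- n = 4
    subst h4
    have : Real.pi / (2 * (4:ℕ)) = π / 8 := by push_cast; ring
    rw [this]
    have h6 : ((((4:ℕ)):ℝ) ^ 2 - 4) / 2 = 6 := by norm_num
    rw [h6]
    exact cot_pi_div_eight_lt
  · -- n ≥ 5
    have hn5 : (5:ℝ) ≤ (n:ℝ) := by exact_mod_cast h5
    set x := Real.pi / (2 * (n:ℝ)) with hx
    have hnpos : (0:ℝ) < n := by linarith
    have hxpos : 0 < x := by positivity
    have hxlt : x < π / 2 := by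
      rw [hx, div_lt_div_iff₀ (by positivity) (by norm_num)]
      nlinarith [Real.pi_pos]
    have htan : x < Real.tan x := Real.lt_tan hxpos hxlt
    have htanpos : 0 < Real.tan x := lt_trans hxpos htan
    have hsinpos : 0 < Real.sin x := Real.sin_pos_of_pos_of_lt_pi hxpos (by linarith [Real.pi_pos])
    have hcospos : 0 < Real.cos x := Real.cos_pos_of_mem_Ioo ⟨by linarith, hxlt⟩
    have hcot : Real.cot x = (Real.tan x)⁻¹ := by
      rw [Real.cot_eq_cos_div_sin, Real.tan_eq_sin_div_cos, inv_div]
    have hcotlt : Real.cot x < 1 / x := by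
      rw [hcot, one_div]
      exact inv_strictAnti₀ hxpos htan
    have h1x : 1 / x = 2 * n / π := by
      rw [hx]; field_simp
    have hmain : 2 * (n:ℝ) / π < Real.sqrt (((n:ℝ) ^ 2 - 4) / 2) := by
      rw [Real.lt_sqrt (by positivity)]
      rw [div_pow, div_lt_iff₀ (by positivity)]
      nlinarith [Real.pi_pos, sq_nonneg ((n:ℝ) - 5), sq_nonneg (π - 3.141592)]
    calc Real.cot x < 1 / x := hcotlt
      _ = 2 * n / π := h1x
      _ < _ := hmain
end

section
/- Let γ : ℝ → ℝ² be a twice differentiable curve with [γ(t), γ′(t)] ≠ 0 for all t, and define Γ(t) = γ′(t) / [γ(t), γ′(t)]. Then Γ is differentiable and [γ(t), Γ′(t)] = 0 for all t; that is, at each t the velocity Γ′(t) is parallel to the position vector γ(t), so Γ is an integral curve of the homogeneous direction field that assigns, along the ray spanned by γ′(t), the direction of γ(t). -/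
/-- **Lemma (trajectory at infinity of the outer billiard).** If `γ : ℝ → ℝ²` is twice
differentiable with `[γ t, γ′ t] ≠ 0` for all `t` and `Γ t = γ′ t / [γ t, γ′ t]`, then
`Γ` is differentiable and `[γ t, Γ′ t] = 0` for all `t`: the velocity of `Γ` is parallel
to the position vector `γ t`, so `Γ` is an integral curve of the homogeneous direction
field assigning the direction of `γ t` along the ray spanned by `γ′ t`. -/
theorem outer_billiard_at_infinity (γ : ℝ → ℝ × ℝ)
    (hγ : Differentiable ℝ γ) (hγ' : Differentiable ℝ (deriv γ))
    (hW : ∀ t, areaForm (γ t) (deriv γ t) ≠ 0)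
    (Γ : ℝ → ℝ × ℝ)
    (hΓ : ∀ t, Γ t = (areaForm (γ t) (deriv γ t))⁻¹ • deriv γ t) :
    Differentiable ℝ Γ ∧ ∀ t, areaForm (γ t) (deriv Γ t) = 0 := by
  have key : ∀ t, HasDerivAt Γ
      ((-(areaForm (γ t) (deriv (deriv γ) t)) / (areaForm (γ t) (deriv γ t))^2) • deriv γ t
        + (areaForm (γ t) (deriv γ t))⁻¹ • deriv (deriv γ) t) t := by
    intro t
    set a := γ t
    set a' := deriv γ t
    set a'' := deriv (deriv γ) t
    have h1 : HasDerivAt γ a' t := (hγ t).hasDerivAt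
    have h2 : HasDerivAt (deriv γ) a'' t := (hγ' t).hasDerivAt
    have h1f : HasDerivAt (fun s => (γ s).1) a'.1 t := h1.fst
    have h1s : HasDerivAt (fun s => (γ s).2) a'.2 t := h1.snd
    have h2f : HasDerivAt (fun s => (deriv γ s).1) a''.1 t := h2.fst
    have h2s : HasDerivAt (fun s => (deriv γ s).2) a''.2 t := h2.snd
    have hWd : HasDerivAt (fun s => areaForm (γ s) (deriv γ s))
        (areaForm a a'') t := by
      have := ((h1f.mul h2s).sub (h1s.mul h2f))
      exact this.congr_deriv (by unfold areaForm; ring)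
    have hinv : HasDerivAt (fun s => (areaForm (γ s) (deriv γ s))⁻¹)
        (-(areaForm a a'') / (areaForm a a')^2) t := hWd.inv (hW t)
    have hs : HasDerivAt (fun s => (areaForm (γ s) (deriv γ s))⁻¹ • deriv γ s)
        ((-(areaForm a a'') / (areaForm a a')^2) • a' + (areaForm a a')⁻¹ • a'') t :=
      by exact (hinv.smul h2).congr_deriv (add_comm _ _)
    exact hs.congr_of_eventuallyEq (Filter.Eventually.of_forall fun s => hΓ s)
  have hdiff : Differentiable ℝ Γ := fun t => (key t).differentiableAt
  refine ⟨hdiff, fun t => ?_⟩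
  rw [(key t).deriv]
  have hW' := hW t
  simp only [areaForm, Prod.fst_add, Prod.snd_add, Prod.smul_fst, Prod.smul_snd,
    smul_eq_mul] at *
  field_simp
  ring
end
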